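/- arXiv:1707.05039 — 9 statements merged into one kernel-verified Lean document; each statement's English description precedes it below -/
import Mathlib

section
/- The sesquilinear pairing (·,·) : V × V' → F_q[x]/⟨x^m − 1⟩ defined by (a(x),b(x)) = Σ_i λ_i a_i(x) b_i(x^{-1}) (x^m−1)/(x^{m_i}−λ_i) is non-degenerate: if (a(x), b(x)) = 0 for all b(x) ∈ V', then a(x) = 0. -/
open Polynomial Finset

/-- The polynomial `∑ j a_j x^j` associated to a coefficient vector. -/
noncomputable def blockPoly {F : Type*} [Field F] {n : ℕ} (a : Fin n → F) : Polynomial F :=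
  ∑ j, Polynomial.C (a j) * Polynomial.X ^ (j : ℕ)

/-- The pairing `(a(x),b(x)) = Σ_i λ_i a_i(x) b_i(x^{-1}) (x^M−1)/(x^{m_i}−λ_i)`,
viewed in `F_q[x]/⟨x^M − 1⟩`; here `b_i(x^{-1})` substitutes `x^{-1} = λ_i x^{m_i−1}`
and `λ_i(x^M−1)/(x^{m_i}−λ_i) = Σ_{k=0}^{M/m_i−1} λ_i^{M/m_i−k} x^{k m_i}`. -/
noncomputable def mtPairing {F : Type*} [Field F] {ℓ : ℕ} (m : Fin ℓ → ℕ)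
    (Λ : Fin ℓ → F) (M : ℕ) (a b : ∀ i, Fin (m i) → F) :
    Polynomial F ⧸ Ideal.span {(X : Polynomial F) ^ M - 1} :=
  Ideal.Quotient.mk (Ideal.span {(X : Polynomial F) ^ M - 1})
    (∑ i, C (Λ i) * blockPoly (a i)
      * (∑ j : Fin (m i), C (b i j) * (C (Λ i) * X ^ (m i - 1)) ^ (j : ℕ))
      * (∑ k ∈ Finset.range (M / m i), C (Λ i ^ (M / m i - 1 - k)) * X ^ (k * m i)))

/-- The sesquilinear pairing `(·,·) : V × V' → F_q[x]/⟨x^M − 1⟩` is non-degenerate: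
if `(a(x), b(x)) = 0` for all `b(x) ∈ V'`, then `a(x) = 0`. -/
theorem mt_pairing_nondegenerate (F : Type*) [Field F] [Fintype F]
    (ℓ : ℕ) (m : Fin ℓ → ℕ) (hm : ∀ i, 0 < m i)
    (hco : ∀ i, Nat.Coprime (m i) (Fintype.card F))
    (Λ : Fin ℓ → F) (hΛ : ∀ i, Λ i ≠ 0)
    (M : ℕ) (hM : M = Finset.univ.lcm fun i => m i * orderOf (Λ i))
    (a : ∀ i, Fin (m i) → F)
    (h : ∀ b : ∀ i, Fin (m i) → F, mtPairing m Λ M a b = 0) :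
    a = 0 := by
  funext i₀ j₀
  simp only [Pi.zero_apply]
  have hmi : 0 < m i₀ := hm i₀
  have hdvd : m i₀ ∣ M := hM ▸ dvd_trans (dvd_mul_right _ _) (Finset.dvd_lcm (mem_univ i₀))
  have hM0 : 0 < M := by
    rw [hM, Nat.pos_iff_ne_zero]
    intro h0
    rw [Finset.lcm_eq_zero_iff] at h0
    obtain ⟨i, -, hi⟩ := h0
    have h1 : IsOfFinOrder (Λ i) := by
      refine isOfFinOrder_iff_pow_eq_one.mpr ⟨Fintype.card F - 1, ?_, ?_⟩
      · have := Fintype.one_lt_card (α := F); omega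
      · exact FiniteField.pow_card_sub_one_eq_one _ (hΛ i)
    have := h1.orderOf_pos
    have := hm i
    nlinarith [hi.symm]
  have hq0 : 0 < M / m i₀ := Nat.div_pos (Nat.le_of_dvd hM0 hdvd) hmi
  -- the test vector
  set b : ∀ i, Fin (m i) → F := Pi.single i₀ (Pi.single ⟨0, hmi⟩ 1) with hb
  have hP := h b
  rw [mtPairing, Ideal.Quotient.eq_zero_iff_mem, Ideal.mem_span_singleton] at hP
  set S : Polynomial F :=
    ∑ k ∈ Finset.range (M / m i₀), C (Λ i₀ ^ (M / m i₀ - 1 - k)) * X ^ (k * m i₀) with hS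
  -- simplify the sum to the single i₀ term
  have hsum : (∑ i, C (Λ i) * blockPoly (a i)
      * (∑ j : Fin (m i), C (b i j) * (C (Λ i) * X ^ (m i - 1)) ^ (j : ℕ))
      * (∑ k ∈ Finset.range (M / m i), C (Λ i ^ (M / m i - 1 - k)) * X ^ (k * m i)))
      = C (Λ i₀) * blockPoly (a i₀) * S := by
    rw [Finset.sum_eq_single i₀]
    · have : (∑ j : Fin (m i₀), C (b i₀ j) * (C (Λ i₀) * X ^ (m i₀ - 1)) ^ (j : ℕ)) = 1 := by
        rw [hb, Pi.single_eq_same]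
        rw [Finset.sum_eq_single (⟨0, hmi⟩ : Fin (m i₀))]
        · simp
        · intro j _ hj
          rw [Pi.single_eq_of_ne hj, map_zero, zero_mul]
        · simp
      rw [this, mul_one]
    · intro i _ hi
      have : b i = 0 := Pi.single_eq_of_ne hi _
      simp [this]
    · simp
  rw [hsum] at hP
  -- degree bound forces the polynomial to be zero
  have hdegB : (blockPoly (a i₀)).degree ≤ ((m i₀ - 1 : ℕ) : WithBot ℕ) := by
    refine (Polynomial.degree_sum_le _ _).trans ?_
    refine Finset.sup_le fun j _ => (degree_C_mul_X_pow_le _ _).trans ?_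
    exact_mod_cast Nat.le_sub_one_of_lt j.isLt
  have hdegS : S.degree ≤ (((M / m i₀ - 1) * m i₀ : ℕ) : WithBot ℕ) := by
    refine (Polynomial.degree_sum_le _ _).trans ?_
    refine Finset.sup_le fun k hk => (degree_C_mul_X_pow_le _ _).trans ?_
    have : k ≤ M / m i₀ - 1 := Nat.le_sub_one_of_lt (Finset.mem_range.mp hk)
    exact_mod_cast Nat.mul_le_mul_right _ this
  have hqm : (M / m i₀ - 1) * m i₀ = M - m i₀ := by
    rw [Nat.sub_mul, Nat.div_mul_cancel hdvd, one_mul]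
  have hmile : m i₀ ≤ M := Nat.le_of_dvd hM0 hdvd
  have hzero : C (Λ i₀) * blockPoly (a i₀) * S = 0 := by
    refine Polynomial.eq_zero_of_dvd_of_degree_lt hP ?_
    have h1 : (C (Λ i₀) * blockPoly (a i₀) * S).degree
        ≤ ((m i₀ - 1 + (M / m i₀ - 1) * m i₀ : ℕ) : WithBot ℕ) := by
      refine (Polynomial.degree_mul_le _ _).trans ?_
      refine le_trans (add_le_add
        ((Polynomial.degree_mul_le _ _).trans (add_le_add Polynomial.degree_C_le hdegB))
        hdegS) ?_
      rw [zero_add, ← Nat.cast_add]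
    rw [← Polynomial.C_1, Polynomial.degree_X_pow_sub_C hM0]
    refine lt_of_le_of_lt h1 ?_
    exact_mod_cast (by omega : m i₀ - 1 + (M / m i₀ - 1) * m i₀ < M)
  -- from the product being zero, blockPoly (a i₀) = 0
  have hSne : S ≠ 0 := by
    intro h0
    have hc : S.coeff ((M / m i₀ - 1) * m i₀) = 1 := by
      rw [hS, Polynomial.finset_sum_coeff]
      rw [Finset.sum_eq_single (M / m i₀ - 1)]
      · simp
      · intro k _ hk
        rw [Polynomial.coeff_C_mul, Polynomial.coeff_X_pow, if_neg, mul_zero]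
        intro he
        exact hk (Nat.eq_of_mul_eq_mul_right hmi he.symm)
      · intro hmem
        exact absurd (Finset.mem_range.mpr (by omega)) hmem
    rw [h0, Polynomial.coeff_zero] at hc
    exact one_ne_zero hc.symm
  have hB : blockPoly (a i₀) = 0 := by
    rcases mul_eq_zero.mp hzero with h1 | h1
    · rcases mul_eq_zero.mp h1 with h2 | h2
      · exact absurd h2 (Polynomial.C_ne_zero.mpr (hΛ i₀))
      · exact h2
    · exact absurd h1 hSne
  have := congrArg (fun p => Polynomial.coeff p (j₀ : ℕ)) hB
  simpa [blockPoly, Polynomial.finset_sum_coeff, Polynomial.coeff_C_mul,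
    Polynomial.coeff_X_pow, Fin.val_eq_val] using this
end

section
/- If C is a Λ-multi-twisted code of length n over F_q (an F_q[x]-submodule of V = ∏_i F_q[x]/⟨x^{m_i} − λ_i⟩), then its dual C^⊥ with respect to the standard inner product on F_q^n is a Λ'-multi-twisted code, i.e., C^⊥ is invariant under the Λ'-multi-twisted shift T_{Λ'} where Λ' = (λ_1^{-1},…,λ_ℓ^{-1}). -/
open Finset

/-- The `Λ`-multi-twisted shift on `F^n = ∏ i, F^{m i}`. -/
def mtShift {F : Type*} [Field F] {ℓ : ℕ} (m : Fin ℓ → ℕ) (hm : ∀ i, 0 < m i)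
    (Λ : Fin ℓ → F) (c : ∀ i, Fin (m i) → F) : ∀ i, Fin (m i) → F :=
  fun i j =>
    if (j : ℕ) = 0 then Λ i * c i ⟨m i - 1, Nat.sub_lt (hm i) Nat.one_pos⟩
    else c i ⟨(j : ℕ) - 1, lt_of_le_of_lt (Nat.sub_le _ _) j.isLt⟩

/-- The standard inner product on `F^n = ∏ i, F^{m i}`. -/
def mtInner {F : Type*} [Field F] {ℓ : ℕ} (m : Fin ℓ → ℕ)
    (a b : ∀ i, Fin (m i) → F) : F :=
  ∑ i, ∑ j, a i j * b i j

lemma mtShift_injective {F : Type*} [Field F] {ℓ : ℕ} (m : Fin ℓ → ℕ) (hm : ∀ i, 0 < m i)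
    (Λ : Fin ℓ → F) (hΛ : ∀ i, Λ i ≠ 0) :
    Function.Injective (mtShift m hm Λ) := by
  intro c d h
  funext i j
  by_cases hj : (j : ℕ) + 1 < m i
  · have := congrFun (congrFun h i) ⟨(j : ℕ) + 1, hj⟩
    simp only [mtShift, Nat.succ_ne_zero, if_false, Nat.add_sub_cancel] at this
    convert this using 2
  · have hj' : (j : ℕ) = m i - 1 := by omega
    have := congrFun (congrFun h i) ⟨0, hm i⟩
    simp only [mtShift, if_pos rfl] at this
    have h2 := mul_left_cancel₀ (hΛ i) this
    have : j = (⟨m i - 1, Nat.sub_lt (hm i) Nat.one_pos⟩ : Fin (m i)) := Fin.ext hj'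
    rw [this]; exact h2

lemma mtInner_shift {F : Type*} [Field F] {ℓ : ℕ} (m : Fin ℓ → ℕ) (hm : ∀ i, 0 < m i)
    (Λ : Fin ℓ → F) (hΛ : ∀ i, Λ i ≠ 0) (a c : ∀ i, Fin (m i) → F) :
    mtInner m (mtShift m hm (fun i => (Λ i)⁻¹) a) (mtShift m hm Λ c) = mtInner m a c := by
  unfold mtInner
  refine Finset.sum_congr rfl fun i _ => ?_
  set σ : Fin (m i) → Fin (m i) := fun j =>
    if (j : ℕ) = 0 then ⟨m i - 1, Nat.sub_lt (hm i) Nat.one_pos⟩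
    else ⟨(j : ℕ) - 1, lt_of_le_of_lt (Nat.sub_le _ _) j.isLt⟩ with hσ
  have hinj : Function.Injective σ := by
    intro j k hjk
    simp only [hσ] at hjk
    split_ifs at hjk with h1 h2 h2 <;>
      [skip; skip; skip; skip] <;>
      (apply Fin.ext; have := congrArg Fin.val hjk; simp at this; omega)
  have hbij : Function.Bijective σ := (Finite.injective_iff_bijective).mp hinj
  rw [← Fintype.sum_bijective σ hbij _ (fun j => a i j * c i j) (fun j => rfl)]
  refine Finset.sum_congr rfl fun j _ => ?_
  simp only [mtShift, hσ]
  split_ifs with h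
  · rw [mul_mul_mul_comm, inv_mul_cancel₀ (hΛ i), one_mul]
  · rfl

/-- If `C` is a `Λ`-multi-twisted code of length `n` over `F_q` (a linear code invariant
under the `Λ`-multi-twisted shift `T_Λ`), then its dual `C^⊥` with respect to the standard
inner product is a `Λ'`-multi-twisted code, i.e. it is invariant under `T_{Λ'}` with
`Λ' = (λ_1^{-1},…,λ_ℓ^{-1})`. -/
theorem dual_of_multiTwisted_is_multiTwisted (F : Type*) [Field F] [Fintype F]
    (ℓ : ℕ) (m : Fin ℓ → ℕ) (hm : ∀ i, 0 < m i)
    (hco : ∀ i, Nat.Coprime (m i) (Fintype.card F))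
    (Λ : Fin ℓ → F) (hΛ : ∀ i, Λ i ≠ 0)
    (C : Submodule F (∀ i, Fin (m i) → F))
    (hC : ∀ c ∈ C, mtShift m hm Λ c ∈ C) :
    ∀ a : ∀ i, Fin (m i) → F, (∀ c ∈ C, mtInner m a c = 0) →
      ∀ c ∈ C, mtInner m (mtShift m hm (fun i => (Λ i)⁻¹) a) c = 0 := by
  intro a ha c hc
  -- the shift restricted to C is injective, hence surjective (C is finite)
  let f : C → C := fun x => ⟨mtShift m hm Λ x.1, hC x.1 x.2⟩
  have hfinj : Function.Injective f := by
    intro x y hxy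
    exact Subtype.ext (mtShift_injective m hm Λ hΛ (congrArg Subtype.val hxy))
  have hfsurj : Function.Surjective f := (Finite.injective_iff_surjective).mp hfinj
  obtain ⟨⟨c', hc'⟩, hfc⟩ := hfsurj ⟨c, hc⟩
  have hcc : mtShift m hm Λ c' = c := congrArg Subtype.val hfc
  rw [← hcc, mtInner_shift m hm Λ hΛ]
  exact ha c' hc'
end

section
/- Let C be a Λ-multi-twisted code of length n over F_q generated as an F_q[x]-module by (a_{d,1}(x),…,a_{d,ℓ}(x)), 1 ≤ d ≤ k. Then C decomposes uniquely as C = ⊕_{w=1}^r C_w, where C_w is the F_w-linear code of length ℓ spanned by (ε_{w,1}a_{d,1}(α_w),…,ε_{w,ℓ}a_{d,ℓ}(α_w)) for 1 ≤ d ≤ k; moreover dim_{F_q} C = Σ_{w=1}^r dim_{F_w}(C_w) · deg g_w(x). -/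
/-!
The `g_w` are distinct monic irreducibles, hence pairwise coprime, and each `x^{m_i} - λ_i` is the
product of those `g_w` that divide it. By the Chinese remainder theorem, the evaluation
`v ↦ (v_i(α_w))_{w,i}` is therefore injective on `V`, and `F_q[x]` maps onto `∏_w F_w`. The latter
means that the `F_q[x]`-span of the evaluated generators is the product of their `F_w`-spans
`C_w`, and the dimension formula follows from `[F_w : F_q] = deg g_w`.
-/

open Polynomial Finset
open scoped Classical

noncomputable instance {F : Type*} [Field F] (f : Polynomial F) :
    Algebra (Polynomial F) (AdjoinRoot f) := Ideal.Quotient.algebra _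

instance {F : Type*} [Field F] (f : Polynomial F) :
    IsScalarTower F (Polynomial F) (AdjoinRoot f) := Ideal.Quotient.isScalarTower _ _ _

/-- Evaluation of an element of `F[x]/⟨p⟩` at the root of `g` in `F_w = F[x]/⟨g⟩`,
defined to be `0` when `g` does not divide `p` (i.e. when `ε_{w,i} = 0`). -/
noncomputable def evalMap {F : Type*} [Field F] (p g : Polynomial F) :
    AdjoinRoot p → AdjoinRoot g :=
  if hd : g ∣ p then
    (AdjoinRoot.liftAlgHom p (Algebra.ofId F (AdjoinRoot g)) (AdjoinRoot.root g) (by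
      have : aeval (AdjoinRoot.root g) p = 0 := by
        obtain ⟨c, hc⟩ := hd
        rw [hc, map_mul]
        simp [AdjoinRoot.aeval_eq, AdjoinRoot.mk_self]
      exact this) : AdjoinRoot p → AdjoinRoot g)
  else fun _ => 0

open Function

namespace Polynomial

theorem pairwise_isCoprime_of_injective {K ι : Type*} [Field K] {g : ι → K[X]}
    (hirr : ∀ w, Irreducible (g w)) (hmon : ∀ w, (g w).Monic) (hinj : Injective g) :
    Pairwise (IsCoprime on g) := by
  intro w w' hne
  rw [onFun, (hirr w).coprime_iff_not_dvd]
  exact fun hdvd => hne <| hinj <| eq_of_monic_of_associated (hmon w) (hmon w')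
    ((hirr w).associated_of_dvd (hirr w') hdvd)

end Polynomial

theorem AdjoinRoot.pi_mk_surjective {R ι : Type*} [CommRing R] [Finite ι] {g : ι → R[X]}
    (hcop : Pairwise (IsCoprime on g)) : Surjective fun f : R[X] => fun w => mk (g w) f :=
  fun x =>
    have ⟨f, hf⟩ := Ideal.pi_quotient_surjective
      (fun _ _ hne => (Ideal.isCoprime_span_singleton_iff _ _).mpr (hcop hne)) x
    ⟨f, funext hf⟩

namespace Submodule

theorem span_range_eq_pi_span_of_surjective {R ι κ : Type*} [CommSemiring R] [Fintype ι]
    {A M : κ → Type*} [∀ w, Semiring (A w)] [∀ w, Algebra R (A w)] [∀ w, AddCommMonoid (M w)]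
    [∀ w, Module (A w) (M w)] [∀ w, Module R (M w)] [∀ w, IsScalarTower R (A w) (M w)]
    (hsurj : Surjective fun r : R => fun w => algebraMap R (A w) r) (b : ι → ∀ w, M w) :
    span R (Set.range b) =
      pi Set.univ fun w => (span (A w) (Set.range fun d => b d w)).restrictScalars R := by
  refine le_antisymm (span_le.mpr ?_) fun x hx => ?_
  · rintro _ ⟨d, rfl⟩ w -
    exact subset_span ⟨d, rfl⟩
  have hc w : ∃ c : ι → A w, ∑ d, c d • b d w = x w :=
    (mem_span_range_iff_exists_fun (A w)).mp (hx w trivial)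
  choose c hc using hc
  choose r hr using fun d => hsurj fun w => c w d
  refine (mem_span_range_iff_exists_fun R).mpr ⟨r, funext fun w => ?_⟩
  simp only [Finset.sum_apply, Pi.smul_apply, ← algebraMap_smul (A w), ← hc w]
  exact Finset.sum_congr rfl fun d _ => congrArg (· • b d w) (congrFun (hr d) w)

theorem finrank_pi_univ {K κ : Type*} [DivisionRing K] [Fintype κ] {V : κ → Type*}
    [∀ w, AddCommGroup (V w)] [∀ w, Module K (V w)] (N : ∀ w, Submodule K (V w))
    [∀ w, FiniteDimensional K (N w)] :
    Module.finrank K (pi Set.univ N) = ∑ w, Module.finrank K (N w) := by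
  let e : pi Set.univ N ≃ₗ[K] ∀ w, N w :=
    { toFun x w := ⟨x.1 w, x.2 w trivial⟩
      invFun y := ⟨fun w => y w, fun w _ => (y w).2⟩
      map_add' _ _ := rfl
      map_smul' _ _ := rfl
      left_inv _ := rfl
      right_inv _ := rfl }
  rw [e.finrank_eq, Module.finrank_pi_fintype]

theorem finrank_restrictScalars {K L V : Type*} [Field K] [DivisionRing L] [Algebra K L]
    [AddCommGroup V] [Module K V] [Module L V] [IsScalarTower K L V] (N : Submodule L V) :
    Module.finrank K (N.restrictScalars K) = Module.finrank K L * Module.finrank L N :=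
  (Module.finrank_mul_finrank K L N).symm

end Submodule

section EvalMap

variable {F : Type*} [Field F] {p g : F[X]}

theorem evalMap_of_dvd (h : g ∣ p) : evalMap p g = AdjoinRoot.algHomOfDvd F p g h :=
  dif_pos h

theorem evalMap_of_not_dvd (h : ¬g ∣ p) : evalMap p g = 0 :=
  dif_neg h

theorem evalMap_mk_of_dvd (h : g ∣ p) (f : F[X]) :
    evalMap p g (AdjoinRoot.mk p f) = AdjoinRoot.mk g f := by
  rw [evalMap_of_dvd h]
  exact AdjoinRoot.aeval_eq f

variable (p g) in
noncomputable def evalMapₗ : AdjoinRoot p →ₗ[F[X]] AdjoinRoot g where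
  toFun := evalMap p g
  map_add' u v := by
    by_cases h : g ∣ p
    · simp only [evalMap_of_dvd h, map_add]
    · simp only [evalMap_of_not_dvd h, Pi.zero_apply, add_zero]
  map_smul' c v := by
    by_cases h : g ∣ p
    · obtain ⟨f, rfl⟩ := AdjoinRoot.mk_surjective v
      change evalMap p g (AdjoinRoot.mk p c * AdjoinRoot.mk p f) =
        AdjoinRoot.mk g c * evalMap p g (AdjoinRoot.mk p f)
      rw [← map_mul, evalMap_mk_of_dvd h, evalMap_mk_of_dvd h, map_mul]
    · simp only [evalMap_of_not_dvd h, Pi.zero_apply, smul_zero]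

theorem eq_zero_of_forall_evalMap_eq_zero {ι : Type*} [Fintype ι] {g : ι → F[X]}
    (hcop : Pairwise (IsCoprime on g)) {ε : ι → ℕ} (hε : ∀ w, ε w ≤ 1)
    (hp : p = ∏ w, g w ^ ε w) {v : AdjoinRoot p} (hv : ∀ w, evalMap p (g w) v = 0) : v = 0 := by
  obtain ⟨f, rfl⟩ := AdjoinRoot.mk_surjective v
  rw [AdjoinRoot.mk_eq_zero, hp]
  refine Fintype.prod_dvd_of_coprime (fun w w' hne => (hcop hne).pow) fun w => ?_
  rcases Nat.le_one_iff_eq_zero_or_eq_one.mp (hε w) with hw | hw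
  · rw [hw, pow_zero]
    exact one_dvd f
  · have hdvd : g w ∣ p := by
      rw [hp]
      exact (dvd_pow_self (g w) (by omega)).trans (Finset.dvd_prod_of_mem _ (Finset.mem_univ w))
    rw [hw, pow_one, ← AdjoinRoot.mk_eq_zero, ← evalMap_mk_of_dvd hdvd]
    exact hv w

end EvalMap

section CRTMap

variable {F ι κ : Type*} [Field F] (p : ι → F[X]) (g : κ → F[X])

noncomputable def crtMap : (∀ i, AdjoinRoot (p i)) →ₗ[F[X]] ∀ w, ι → AdjoinRoot (g w) :=
  LinearMap.pi fun w => LinearMap.pi fun i => (evalMapₗ (p i) (g w)).comp (LinearMap.proj i)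

theorem coe_crtMap : ⇑(crtMap p g) = fun v w i => evalMap (p i) (g w) (v i) :=
  rfl

variable {p g}

theorem crtMap_injective [Fintype κ] (hcop : Pairwise (IsCoprime on g)) {ε : κ → ι → ℕ}
    (hε : ∀ w i, ε w i ≤ 1) (hp : ∀ i, p i = ∏ w, g w ^ ε w i) : Injective (crtMap p g) :=
  (injective_iff_map_eq_zero _).mpr fun _ hv => funext fun i =>
    eq_zero_of_forall_evalMap_eq_zero hcop (hε · i) (hp i) fun w => congrFun (congrFun hv w) i

theorem map_crtMap_span [Finite κ] {ι' : Type*} [Fintype ι'] (hcop : Pairwise (IsCoprime on g))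
    (a : ι' → ∀ i, AdjoinRoot (p i)) :
    (Submodule.span F[X] (Set.range a)).map (crtMap p g) = Submodule.pi Set.univ fun w =>
      (Submodule.span (AdjoinRoot (g w))
        (Set.range fun d i => evalMap (p i) (g w) (a d i))).restrictScalars F[X] := by
  rw [Submodule.map_span, ← Set.range_comp]
  exact Submodule.span_range_eq_pi_span_of_surjective (A := fun w => AdjoinRoot (g w))
    (AdjoinRoot.pi_mk_surjective hcop) _

end CRTMap
theorem multiTwisted_CRT_decomposition_general (F : Type*) [Field F]
    (ℓ r k : ℕ) (m : Fin ℓ → ℕ)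
    (Λ : Fin ℓ → F)
    (g : Fin r → Polynomial F) (hirr : ∀ w, Irreducible (g w))
    (hmon : ∀ w, (g w).Monic) (hdist : Function.Injective g)
    (ε : Fin r → Fin ℓ → ℕ)
    (hε : ∀ w i, ε w i = if g w ∣ (X ^ m i - C (Λ i)) then 1 else 0)
    (hfact : ∀ i, (X : Polynomial F) ^ m i - C (Λ i) = ∏ w, g w ^ ε w i)
    (a : Fin k → ∀ i, AdjoinRoot ((X : Polynomial F) ^ m i - C (Λ i)))
    (Ccode : Submodule (Polynomial F) (∀ i, AdjoinRoot ((X : Polynomial F) ^ m i - C (Λ i))))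
    (hCcode : Ccode = Submodule.span (Polynomial F) (Set.range a))
    (Cw : ∀ w : Fin r, Submodule (AdjoinRoot (g w)) (Fin ℓ → AdjoinRoot (g w)))
    (hCw : ∀ w, Cw w = Submodule.span (AdjoinRoot (g w))
      (Set.range fun d => fun i => evalMap (X ^ m i - C (Λ i)) (g w) (a d i))) :
    Function.Injective
        (fun (v : ∀ i, AdjoinRoot ((X : Polynomial F) ^ m i - C (Λ i))) =>
          fun (w : Fin r) (i : Fin ℓ) => evalMap (X ^ m i - C (Λ i)) (g w) (v i)) ∧
    ((fun (v : ∀ i, AdjoinRoot ((X : Polynomial F) ^ m i - C (Λ i))) =>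
          fun (w : Fin r) (i : Fin ℓ) => evalMap (X ^ m i - C (Λ i)) (g w) (v i)) ''
        (Ccode : Set (∀ i, AdjoinRoot ((X : Polynomial F) ^ m i - C (Λ i))))
      = {x : ∀ w : Fin r, Fin ℓ → AdjoinRoot (g w) | ∀ w, x w ∈ Cw w}) ∧
    Module.finrank F (Ccode.restrictScalars F)
      = ∑ w, Module.finrank (AdjoinRoot (g w)) (Cw w) * (g w).natDegree := by
  have hcop := pairwise_isCoprime_of_injective hirr hmon hdist
  have hinj := crtMap_injective hcop (fun w i => by rw [hε]; split_ifs <;> omega) hfact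
  have himage := map_crtMap_span hcop a
  simp_rw [← hCcode, ← hCw] at himage
  refine ⟨hinj, ?_, ?_⟩
  · rw [← coe_crtMap, ← Submodule.map_coe, himage]
    ext x
    exact ⟨fun hx w => hx w trivial, fun hx w _ => hx w⟩
  · have := fun w => Fact.mk (hirr w)
    have := fun w => (AdjoinRoot.powerBasis (hirr w).ne_zero).finite
    calc Module.finrank F (Ccode.restrictScalars F)
        = Module.finrank F ((Ccode.map (crtMap _ g)).restrictScalars F) :=
          (Submodule.equivMapOfInjective ((crtMap _ g).restrictScalars F) hinj _).finrank_eq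
      _ = Module.finrank F (Submodule.pi Set.univ fun w => (Cw w).restrictScalars F) := by
          rw [himage]; rfl
      _ = ∑ w, Module.finrank F ((Cw w).restrictScalars F) := Submodule.finrank_pi_univ _
      _ = _ := by
          refine Finset.sum_congr rfl fun w _ => ?_
          rw [Submodule.finrank_restrictScalars (Cw w), mul_comm]
          congr 1
          exact finrank_quotient_span_eq_natDegree

/-- A `Λ`-multi-twisted code `C`, generated as an `F_q[x]`-module by `k` elements of
`V = ∏ i F_q[x]/⟨x^{m_i}−λ_i⟩`, decomposes via CRT as the direct sum of its constituents
`C_w` (the `F_w`-spans of the evaluated generators), and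
`dim_{F_q} C = Σ_w dim_{F_w} C_w · deg g_w`. -/
theorem multiTwisted_CRT_decomposition (F : Type*) [Field F] [Fintype F]
    (ℓ r k : ℕ) (m : Fin ℓ → ℕ) (hm : ∀ i, 0 < m i)
    (hco : ∀ i, Nat.Coprime (m i) (Fintype.card F))
    (Λ : Fin ℓ → F) (hΛ : ∀ i, Λ i ≠ 0)
    (g : Fin r → Polynomial F) (hirr : ∀ w, Irreducible (g w))
    (hmon : ∀ w, (g w).Monic) (hdist : Function.Injective g)
    (ε : Fin r → Fin ℓ → ℕ)
    (hε : ∀ w i, ε w i = if g w ∣ (X ^ m i - C (Λ i)) then 1 else 0)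
    (hfact : ∀ i, (X : Polynomial F) ^ m i - C (Λ i) = ∏ w, g w ^ ε w i)
    (a : Fin k → ∀ i, AdjoinRoot ((X : Polynomial F) ^ m i - C (Λ i)))
    (Ccode : Submodule (Polynomial F) (∀ i, AdjoinRoot ((X : Polynomial F) ^ m i - C (Λ i))))
    (hCcode : Ccode = Submodule.span (Polynomial F) (Set.range a))
    (Cw : ∀ w : Fin r, Submodule (AdjoinRoot (g w)) (Fin ℓ → AdjoinRoot (g w)))
    (hCw : ∀ w, Cw w = Submodule.span (AdjoinRoot (g w))
      (Set.range fun d => fun i => evalMap (X ^ m i - C (Λ i)) (g w) (a d i))) :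
    Function.Injective
        (fun (v : ∀ i, AdjoinRoot ((X : Polynomial F) ^ m i - C (Λ i))) =>
          fun (w : Fin r) (i : Fin ℓ) => evalMap (X ^ m i - C (Λ i)) (g w) (v i)) ∧
    ((fun (v : ∀ i, AdjoinRoot ((X : Polynomial F) ^ m i - C (Λ i))) =>
          fun (w : Fin r) (i : Fin ℓ) => evalMap (X ^ m i - C (Λ i)) (g w) (v i)) ''
        (Ccode : Set (∀ i, AdjoinRoot ((X : Polynomial F) ^ m i - C (Λ i))))
      = {x : ∀ w : Fin r, Fin ℓ → AdjoinRoot (g w) | ∀ w, x w ∈ Cw w}) ∧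
    Module.finrank F (Ccode.restrictScalars F)
      = ∑ w, Module.finrank (AdjoinRoot (g w)) (Cw w) * (g w).natDegree :=
  multiTwisted_CRT_decomposition_general F ℓ r k m Λ g hirr hmon hdist ε hε hfact a Ccode hCcode Cw
    hCw
end

section
/- The total number of distinct Λ-multi-twisted codes of length n over F_q equals ∏_{w=1}^r (1 + Σ_{b=1}^{ε_w} [ε_w choose b]_{q^{d_w}}), where d_w = deg g_w and ε_w = Σ_{i=1}^ℓ ε_{w,i}. -/
open Polynomial Finset
open scoped Classical

/-- The Gaussian (Q-binomial) coefficient, defined via the q-Pascal recurrence. -/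
def gaussBinom (Q : ℕ) : ℕ → ℕ → ℕ
  | _, 0 => 1
  | 0, _ + 1 => 0
  | k + 1, b + 1 => gaussBinom Q k b + Q ^ (b + 1) * gaussBinom Q k (b + 1)

/-!
Write `V = ∏ᵢ F[X]/⟨fᵢ⟩` with `fᵢ = ∏ {g_w | ε_{w,i} = 1}`. The Chinese remainder theorem splits
each factor, and regrouping by `w` gives `V ≅ ∏_w K_w^{ε_w}` with `K_w = F[X]/⟨g_w⟩` a field with
`q^{d_w}` elements. Since the `g_w` are pairwise coprime, some polynomial acts as `1` on the `w`-th
block and as `0` on the others, so every submodule of `V` is the product of its projections, and an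
`F[X]`-submodule of `K_w^{ε_w}` is just a `K_w`-subspace. Finally, `b`-dimensional subspaces of
`K^{n+1} = K^n × K` either contain `(0, 1)`, and then correspond to `(b-1)`-dimensional subspaces
of `K^n`, or do not, and then are graphs of linear forms on `b`-dimensional subspaces of `K^n`;
this is the `q`-Pascal recurrence defining `gaussBinom`.
-/

open Module Function

namespace LinearPMap

variable {R E F : Type*} [Ring R] [AddCommGroup E] [Module R E] [AddCommGroup F] [Module R F]

def equivSigma : (E →ₗ.[R] F) ≃ Σ U : Submodule R E, U →ₗ[R] F where
  toFun f := ⟨f.domain, f.toFun⟩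
  invFun p := ⟨p.1, p.2⟩

noncomputable def graphEquiv :
    (E →ₗ.[R] F) ≃ {g : Submodule R (E × F) // ∀ x ∈ g, x.1 = 0 → x.2 = 0} where
  toFun f := ⟨f.graph, fun _ hx h ↦ f.graph_fst_eq_zero_snd hx h⟩
  invFun g := g.1.toLinearPMap
  left_inv f := eq_of_eq_graph (Submodule.toLinearPMap_graph_eq _ fun _ hx h ↦
    f.graph_fst_eq_zero_snd hx h)
  right_inv g := Subtype.ext (Submodule.toLinearPMap_graph_eq _ g.2)

lemma finrank_graph {K : Type*} [Field K] [Module K E] [Module K F] (f : E →ₗ.[K] F) :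
    finrank K f.graph = finrank K f.domain := by
  have hinj : Injective ((LinearMap.fst K E F).comp f.graph.subtype) :=
    fun x y hxy ↦ Subtype.ext (Prod.ext hxy (f.mem_graph_snd_inj' x.2 y.2 hxy))
  rw [← LinearMap.finrank_range_of_inj hinj, LinearMap.range_comp, Submodule.range_subtype,
    graph_map_fst_eq_domain]

end LinearPMap

section GaussianCount

variable {K V : Type*} [Field K] [AddCommGroup V] [Module K V]

lemma natCard_finrank_eq_congr {W : Type*} [AddCommGroup W] [Module K W] (e : V ≃ₗ[K] W)
    (b : ℕ) :
    Nat.card {U : Submodule K V // finrank K U = b}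
      = Nat.card {U : Submodule K W // finrank K U = b} :=
  Nat.card_congr <| (Submodule.orderIsoMapComap e).toEquiv.subtypeEquiv fun U ↦ by
    rw [(e.submoduleMap U).finrank_eq]; rfl

lemma finrank_comap_mkQ [FiniteDimensional K V] (p : Submodule K V)
    (U : Submodule K (V ⧸ p)) :
    finrank K (U.comap p.mkQ) = finrank K U + finrank K p := by
  let f : U.comap p.mkQ →ₗ[K] U := p.mkQ.restrict fun _ h ↦ h
  have hf : Surjective f := by
    rintro ⟨y, hy⟩
    obtain ⟨x, rfl⟩ := p.mkQ_surjective y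
    exact ⟨⟨x, hy⟩, rfl⟩
  have hker : LinearMap.ker f = p.comap (U.comap p.mkQ).subtype := by
    ext x; simp [f, LinearMap.restrict_apply, Subtype.ext_iff]
  have hp : p ≤ U.comap p.mkQ := fun x hx ↦ by simp [(Submodule.Quotient.mk_eq_zero p).2 hx]
  rw [← LinearMap.finrank_range_add_finrank_ker f, LinearMap.range_eq_top.2 hf, finrank_top,
    hker, (Submodule.comapSubtypeEquivOfLe hp).finrank_eq]

lemma natCard_finrank_eq_succ_and_mem [FiniteDimensional K V] {x : V} (hx : x ≠ 0) (b : ℕ) :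
    Nat.card {W : Submodule K V // finrank K W = b + 1 ∧ x ∈ W}
      = Nat.card {U : Submodule K (V ⧸ K ∙ x) // finrank K U = b} := by
  set p := K ∙ x
  have hp : finrank K p = 1 := finrank_span_singleton hx
  have comap_map {W : Submodule K V} (hxW : x ∈ W) : (W.map p.mkQ).comap p.mkQ = W := by
    rw [Submodule.comap_map_eq, Submodule.ker_mkQ,
      sup_eq_left.2 ((Submodule.span_singleton_le_iff_mem _ _).2 hxW)]
  refine Nat.card_congr
    { toFun W := ⟨W.1.map p.mkQ, ?_⟩
      invFun U := ⟨U.1.comap p.mkQ, ?_, ?_⟩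
      left_inv W := Subtype.ext (comap_map W.2.2)
      right_inv U := Subtype.ext (Submodule.map_comap_eq_of_surjective p.mkQ_surjective _) }
  · have := finrank_comap_mkQ p (W.1.map p.mkQ)
    rw [comap_map W.2.2, W.2.1, hp] at this
    omega
  · rw [finrank_comap_mkQ, U.2, hp]
  · simp [(Submodule.Quotient.mk_eq_zero p).2 (Submodule.mem_span_singleton_self x)]

variable {N : Type*} [AddCommGroup N] [Module K N]

lemma notMem_iff_forall_fst_eq_zero {W : Submodule K (N × K)} :
    ((0 : N), (1 : K)) ∉ W ↔ ∀ x ∈ W, x.1 = 0 → x.2 = 0 := by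
  refine ⟨fun h x hx hx1 ↦ by_contra fun hx2 ↦ h ?_, fun h h01 ↦ one_ne_zero (h _ h01 rfl)⟩
  convert W.smul_mem x.2⁻¹ hx using 1
  ext <;> simp [hx1, hx2]

lemma natCard_finrank_eq_and_notMem [FiniteDimensional K N] (c : ℕ) :
    Nat.card {W : Submodule K (N × K) // finrank K W = c ∧ ((0 : N), (1 : K)) ∉ W}
      = Nat.card K ^ c * Nat.card {U : Submodule K N // finrank K U = c} := by
  let graphs : {f : N →ₗ.[K] K // finrank K f.domain = c}
      ≃ {W : Submodule K (N × K) // finrank K W = c ∧ ((0 : N), (1 : K)) ∉ W} :=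
    (LinearPMap.graphEquiv.subtypeEquiv fun f ↦ by rw [← f.finrank_graph]; rfl).trans <|
      (Equiv.subtypeSubtypeEquivSubtypeInter _
        fun W : Submodule K (N × K) ↦ finrank K W = c).trans <|
        Equiv.subtypeEquivRight fun W ↦ by rw [and_comm, notMem_iff_forall_fst_eq_zero]
  let pairs : {f : N →ₗ.[K] K // finrank K f.domain = c}
      ≃ {U : Submodule K N // finrank K U = c} × (Fin c → K) :=
    (LinearPMap.equivSigma.subtypeEquiv fun _ ↦ Iff.rfl).trans <|
      (Equiv.subtypeSigmaEquiv _ fun U : Submodule K N ↦ finrank K U = c).trans <|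
        Equiv.sigmaEquivProdOfEquiv fun U ↦
          ((Module.finBasisOfFinrankEq K U.1 U.2).constr K).toEquiv.symm
  rw [← Nat.card_congr graphs, Nat.card_congr pairs, Nat.card_prod, Nat.card_fun,
    Nat.card_eq_fintype_card (α := Fin c), Fintype.card_fin, mul_comm]

lemma natCard_finrank_eq_zero [FiniteDimensional K V] :
    Nat.card {W : Submodule K V // finrank K W = 0} = 1 :=
  Nat.card_eq_one_iff_exists.2
    ⟨⟨⊥, finrank_bot K V⟩, fun W ↦ Subtype.ext (Submodule.finrank_eq_zero.1 W.2)⟩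

lemma natCard_subtype_eq_add_compl {α : Type*} [Finite α] (p q : α → Prop) :
    Nat.card {a // p a} = Nat.card {a // p a ∧ q a} + Nat.card {a // p a ∧ ¬ q a} := by
  rw [← Nat.card_sum]
  exact Nat.card_congr <| (Equiv.sumCompl fun a : {a // p a} ↦ q a).symm.trans <|
    Equiv.sumCongr (Equiv.subtypeSubtypeEquivSubtypeInter _ _)
      (Equiv.subtypeSubtypeEquivSubtypeInter _ fun a ↦ ¬ q a)

lemma natCard_finrank_eq_gaussBinom_pi [Finite K] (n b : ℕ) :
    Nat.card {W : Submodule K (Fin n → K) // finrank K W = b} = gaussBinom (Nat.card K) n b := by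
  induction n generalizing b with
  | zero =>
    rcases b with _ | b
    · exact natCard_finrank_eq_zero
    · rw [gaussBinom, Nat.card_eq_zero]
      exact .inl ⟨fun W ↦ by simpa [W.2] using W.1.finrank_le⟩
  | succ n ih =>
    rcases b with _ | b
    · exact natCard_finrank_eq_zero
    have : Finite (Submodule K ((Fin n → K) × K)) := Finite.of_injective _ SetLike.coe_injective
    set x : (Fin n → K) × K := (0, 1)
    have x_ne : x ≠ 0 := by simp [x, Prod.ext_iff]
    have finrank_quot : finrank K (((Fin n → K) × K) ⧸ K ∙ x) = finrank K (Fin n → K) := by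
      have := Submodule.finrank_quotient_add_finrank (K ∙ x)
      rw [finrank_span_singleton x_ne, finrank_prod, finrank_self] at this
      omega
    rw [natCard_finrank_eq_congr (LinearEquiv.ofFinrankEq _ ((Fin n → K) × K) (by simp)),
      natCard_subtype_eq_add_compl _ (x ∈ ·), natCard_finrank_eq_succ_and_mem x_ne,
      natCard_finrank_eq_and_notMem,
      natCard_finrank_eq_congr (LinearEquiv.ofFinrankEq _ _ finrank_quot), ih, ih, gaussBinom]

theorem natCard_finrank_eq_gaussBinom [Finite K] [FiniteDimensional K V] (b : ℕ) :
    Nat.card {W : Submodule K V // finrank K W = b} = gaussBinom (Nat.card K) (finrank K V) b := by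
  rw [natCard_finrank_eq_congr (LinearEquiv.ofFinrankEq V (Fin (finrank K V) → K) (by simp)),
    natCard_finrank_eq_gaussBinom_pi]

theorem natCard_submodule_eq [Finite K] [FiniteDimensional K V] :
    Nat.card (Submodule K V)
      = 1 + ∑ b ∈ Icc 1 (finrank K V), gaussBinom (Nat.card K) (finrank K V) b := by
  have : Finite V := Module.finite_of_finite K
  have : Fintype (Submodule K V) := .ofFinite _
  have finrank_mem (W : Submodule K V) : finrank K W ∈ range (finrank K V + 1) :=
    mem_range_succ_iff.2 W.finrank_le
  rw [Nat.card_eq_fintype_card, ← card_univ,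
    card_eq_sum_card_fiberwise fun W _ ↦ finrank_mem W, range_eq_Ico,
    sum_eq_sum_Ico_succ_bot (Nat.succ_pos _), zero_add, Nat.succ_eq_add_one,
    Ico_add_one_right_eq_Icc]
  simp only [← Fintype.card_subtype, ← Nat.card_eq_fintype_card, natCard_finrank_eq_gaussBinom]
  rw [gaussBinom]

end GaussianCount

section ProductDecomposition

variable {R ι : Type*} [CommRing R] [Fintype ι] {M : ι → Type*} [∀ i, AddCommGroup (M i)]
  [∀ i, Module R (M i)]

def Submodule.piEquivOfIsCoprime (a : ι → R) (ha : Pairwise (IsCoprime on a))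
    (hM : ∀ i (x : M i), a i • x = 0) : Submodule R (∀ i, M i) ≃ ∀ i, Submodule R (M i) where
  toFun N i := N.map (LinearMap.proj i)
  invFun P := Submodule.pi Set.univ P
  left_inv N := by
    ext x
    simp only [Submodule.mem_pi, Set.mem_univ, true_implies, Submodule.mem_map,
      LinearMap.coe_proj, Function.eval]
    refine ⟨fun hx ↦ ?_, fun hx i ↦ ⟨x, hx, rfl⟩⟩
    choose y hyN hyx using hx
    choose e he using fun i ↦ Ideal.exists_forall_sub_mem_ideal
      (I := fun j ↦ Ideal.span {a j})
      (fun _ _ hij ↦ (Ideal.isCoprime_span_singleton_iff _ _).2 (ha hij)) (Pi.single i 1)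
    have e_smul (i j) (z : M j) : e i • z = (Pi.single i 1 : ι → R) j • z := by
      obtain ⟨c, hc⟩ := Ideal.mem_span_singleton'.1 (he i j)
      rw [← sub_eq_zero, ← sub_smul, ← hc, mul_smul, hM, smul_zero]
    have x_eq : x = ∑ i, e i • y i := by
      ext j
      simp [Finset.sum_apply, e_smul, Pi.single_apply, hyx]
    rw [x_eq]
    exact sum_mem fun i _ ↦ N.smul_mem _ (hyN i)
  right_inv P := by
    funext i
    ext y
    refine ⟨?_, fun hy ↦ ⟨Pi.single i y, ?_, by simp⟩⟩
    · rintro ⟨x, hx, rfl⟩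
      exact Submodule.mem_pi.1 hx i (Set.mem_univ i)
    · refine Submodule.mem_pi.2 fun j _ ↦ ?_
      rcases eq_or_ne j i with rfl | hji
      · simpa using hy
      · simp [Pi.single_eq_of_ne hji]

end ProductDecomposition

def LinearEquiv.piSubtypeComm (R : Type*) [Semiring R] {ι κ : Type*} (P : ι → κ → Prop)
    (M : κ → Type*) [∀ k, AddCommMonoid (M k)] [∀ k, Module R (M k)] :
    (∀ i, ∀ k : {k // P i k}, M k) ≃ₗ[R] ∀ k, ({i // P i k} → M k) where
  toFun x k i := x i ⟨k, i.2⟩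
  invFun y i k := y k ⟨i, k.2⟩
  map_add' _ _ := rfl
  map_smul' _ _ := rfl
  left_inv _ := rfl
  right_inv _ := rfl

lemma Submodule.restrictScalars_bijective_of_surjective {R S M : Type*} [CommSemiring R]
    [Semiring S] [Algebra R S] [AddCommMonoid M] [Module R M] [Module S M] [IsScalarTower R S M]
    (h : Surjective (algebraMap R S)) :
    Bijective (Submodule.restrictScalars R : Submodule S M → Submodule R M) :=
  ⟨Submodule.restrictScalars_injective R S M, fun p ↦
    ⟨Submodule.span S p, by rw [Submodule.restrictScalars_span R S h, Submodule.span_eq]⟩⟩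

noncomputable def Ideal.quotientSpanLinearEquivPiOfEqProd {R ι : Type*} [CommRing R]
    [Fintype ι] {f : R} {g : ι → R} (hf : f = ∏ i, g i) (hg : Pairwise (IsCoprime on g)) :
    (R ⧸ Ideal.span {f}) ≃ₗ[R] ∀ i, R ⧸ Ideal.span {g i} :=
  have hI : Pairwise (IsCoprime on fun i ↦ Ideal.span {g i}) :=
    fun _ _ hij ↦ (Ideal.isCoprime_span_singleton_iff _ _).2 (hg hij)
  (Submodule.quotEquivOfEq _ _ <| by
      rw [hf, ← Ideal.iInf_span_singleton fun _ _ hij ↦ hg hij, LinearMap.ker_pi]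
      simp only [Submodule.ker_mkQ]).trans
    (LinearMap.quotKerEquivOfSurjective _ (Ideal.pi_mkQ_surjective hI))

theorem natCard_submodule_pi_adjoinRoot {F : Type*} [Field F] [Finite F] {g : F[X]} (hg : Irreducible g)
    (T : Type*) [Fintype T] :
    Nat.card (Submodule F[X] (T → AdjoinRoot g))
      = 1 + ∑ b ∈ Icc 1 (Fintype.card T),
          gaussBinom (Nat.card F ^ g.natDegree) (Fintype.card T) b := by
  have := Fact.mk hg
  have : Module.Finite F (AdjoinRoot g) := (AdjoinRoot.powerBasis hg.ne_zero).finite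
  have card_adjoinRoot : Nat.card (AdjoinRoot g) = Nat.card F ^ g.natDegree := by
    rw [Module.natCard_eq_pow_finrank (K := F), (AdjoinRoot.powerBasis hg.ne_zero).finrank,
      AdjoinRoot.powerBasis_dim]
  have : Finite (AdjoinRoot g) := Module.finite_of_finite F
  rw [← Nat.card_congr (Equiv.ofBijective _ (Submodule.restrictScalars_bijective_of_surjective
      (S := AdjoinRoot g) AdjoinRoot.mk_surjective)),
    natCard_submodule_eq, Module.finrank_fintype_fun_eq_card, card_adjoinRoot]

lemma Polynomial.isCoprime_of_irreducible_of_monic {F : Type*} [Field F] {a b : F[X]}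
    (ha : Irreducible a) (hb : Irreducible b) (hma : a.Monic) (hmb : b.Monic) (hne : a ≠ b) :
    IsCoprime a b :=
  ha.coprime_iff_not_dvd.2 fun hab ↦
    hne (eq_of_monic_of_associated hma hmb (ha.associated_of_dvd hb hab))

lemma AdjoinRoot.smul_self_eq_zero {F : Type*} [Field F] (g : F[X]) (y : AdjoinRoot g) :
    g • y = 0 := by
  rw [Algebra.smul_def]
  exact mul_eq_zero_of_left (AdjoinRoot.mk_self (f := g)) y

section ZeroOneExponents

variable {ι : Type*} [Fintype ι] {e : ι → ℕ}

lemma prod_pow_eq_prod_subtype_of_zero_or_one {M : Type*} [CommMonoid M]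
    (he : ∀ i, e i = 0 ∨ e i = 1) (g : ι → M) :
    ∏ i, g i ^ e i = ∏ i : {i // e i = 1}, g i := by
  rw [← Fintype.prod_subtype_mul_prod_subtype (e · = 1),
    Fintype.prod_eq_one (fun i : {i // e i ≠ 1} ↦ g i ^ e i) fun i ↦ by
      simp [(he i).resolve_right i.2], mul_one]
  exact Fintype.prod_congr _ _ fun i ↦ by rw [i.2, pow_one]

lemma card_subtype_eq_one_of_zero_or_one (he : ∀ i, e i = 0 ∨ e i = 1) :
    Fintype.card {i // e i = 1} = ∑ i, e i := by
  rw [Fintype.card_subtype, card_filter]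
  exact sum_congr rfl fun i _ ↦ by rcases he i with h | h <;> simp [h]

end ZeroOneExponents

theorem multiTwisted_code_count_general (F : Type*) [Field F] [Fintype F]
    (q ℓ r : ℕ) (hq : Fintype.card F = q)
    (m : Fin ℓ → ℕ)
    (Λ : Fin ℓ → F)
    (g : Fin r → Polynomial F) (hirr : ∀ w, Irreducible (g w))
    (hmon : ∀ w, (g w).Monic) (hdist : Function.Injective g)
    (ε : Fin r → Fin ℓ → ℕ)
    (hε : ∀ w i, ε w i = if g w ∣ (X ^ m i - C (Λ i)) then 1 else 0)
    (hfact : ∀ i, (X : Polynomial F) ^ m i - C (Λ i) = ∏ w, g w ^ ε w i) :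
    Nat.card (Submodule (Polynomial F)
        (∀ i, AdjoinRoot ((X : Polynomial F) ^ m i - C (Λ i))))
      = ∏ w, (1 + ∑ b ∈ Finset.Icc 1 (∑ i, ε w i),
          gaussBinom (q ^ (g w).natDegree) (∑ i, ε w i) b) := by
  have ε_zero_or_one (w i) : ε w i = 0 ∨ ε w i = 1 := by rw [hε]; split_ifs <;> simp
  have g_coprime : Pairwise (IsCoprime on g) := fun w w' hww' ↦
    isCoprime_of_irreducible_of_monic (hirr w) (hirr w') (hmon w) (hmon w') (hdist.ne hww')
  let crt : (∀ i, AdjoinRoot ((X : F[X]) ^ m i - C (Λ i)))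
      ≃ₗ[F[X]] ∀ w, ({i // ε w i = 1} → AdjoinRoot (g w)) :=
    (LinearEquiv.piCongrRight fun i ↦ Ideal.quotientSpanLinearEquivPiOfEqProd
      ((hfact i).trans (prod_pow_eq_prod_subtype_of_zero_or_one (ε_zero_or_one · i) g))
      (g_coprime.comp_of_injective Subtype.val_injective)).trans
    (LinearEquiv.piSubtypeComm F[X] (fun i w ↦ ε w i = 1) fun w ↦ AdjoinRoot (g w))
  rw [Nat.card_congr (Submodule.orderIsoMapComap crt).toEquiv,
    Nat.card_congr (Submodule.piEquivOfIsCoprime g g_coprime fun w (x : {i // ε w i = 1} → _) ↦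
      funext fun i ↦ AdjoinRoot.smul_self_eq_zero (g w) (x i)),
    Nat.card_pi]
  refine prod_congr rfl fun w _ ↦ ?_
  rw [natCard_submodule_pi_adjoinRoot (hirr w), Nat.card_eq_fintype_card, hq,
    card_subtype_eq_one_of_zero_or_one (ε_zero_or_one w)]

/-- The total number of distinct `Λ`-multi-twisted codes of length `n` over `F_q`
(i.e. `F_q[x]`-submodules of `V = ∏_i F_q[x]/⟨x^{m_i}−λ_i⟩`) equals
`∏_{w=1}^r (1 + Σ_{b=1}^{ε_w} [ε_w choose b]_{q^{d_w}})`, where `d_w = deg g_w` and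
`ε_w = Σ_i ε_{w,i}`. -/
theorem multiTwisted_code_count (F : Type*) [Field F] [Fintype F]
    (q ℓ r : ℕ) (hq : Fintype.card F = q)
    (m : Fin ℓ → ℕ) (hm : ∀ i, 0 < m i)
    (hco : ∀ i, Nat.Coprime (m i) q)
    (Λ : Fin ℓ → F) (hΛ : ∀ i, Λ i ≠ 0)
    (g : Fin r → Polynomial F) (hirr : ∀ w, Irreducible (g w))
    (hmon : ∀ w, (g w).Monic) (hdist : Function.Injective g)
    (ε : Fin r → Fin ℓ → ℕ)
    (hε : ∀ w i, ε w i = if g w ∣ (X ^ m i - C (Λ i)) then 1 else 0)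
    (hfact : ∀ i, (X : Polynomial F) ^ m i - C (Λ i) = ∏ w, g w ^ ε w i) :
    Nat.card (Submodule (Polynomial F)
        (∀ i, AdjoinRoot ((X : Polynomial F) ^ m i - C (Λ i))))
      = ∏ w, (1 + ∑ b ∈ Finset.Icc 1 (∑ i, ε w i),
          gaussBinom (q ^ (g w).natDegree) (∑ i, ε w i) b) :=
  multiTwisted_code_count_general F q ℓ r hq m Λ g hirr hmon hdist ε hε hfact
end

section
/- Let C = ⟨a_1(x),…,a_ρ(x)⟩ be a ρ-generator Λ-multi-twisted code with a_κ(x) = (a_{κ,1}(x),…,a_{κ,ℓ}(x)), and let w_i(x) = gcd(a_{1,i}(x),…,a_{ρ,i}(x), x^{m_i}−λ_i). Then the parity-check polynomial (monic generator of the annihilator ideal Ann(C) = {f ∈ F_q[x] : f·a_κ = 0 in V for all κ}) is h(x) = lcm_{1≤i≤ℓ} [(x^{m_i}−λ_i)/w_i(x)]. -/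
open Polynomial Finset
open scoped Classical

noncomputable instance {F : Type*} [Field F] : NormalizedGCDMonoid (Polynomial F) :=
  UniqueFactorizationMonoid.toNormalizedGCDMonoid _

/-! A polynomial `f` kills the `i`-th coordinates of all generators exactly when
`g_i = x ^ m i - λ i` divides `f · gcd_κ a_{κ,i}`. Since `g_i ≠ 0`, dividing out
`w_i = gcd(g_i, gcd_κ a_{κ,i})` leaves two coprime factors, so this says `g_i / w_i ∣ f`.
Hence `f ∈ Ann(C)` iff every `g_i / w_i` divides `f`, i.e. iff their lcm divides `f`. -/

theorem dvd_mul_iff_div_gcd_dvd {R : Type*} [EuclideanDomain R] [GCDMonoid R] {g : R}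
    (hg : g ≠ 0) (f b : R) : g ∣ f * b ↔ g / gcd g b ∣ f := by
  set d := gcd g b
  have hd : d ≠ 0 := gcd_ne_zero_of_left hg
  have hgd : d * (g / d) = g := EuclideanDomain.mul_div_cancel' hd (gcd_dvd_left g b)
  have hbd : d * (b / d) = b := EuclideanDomain.mul_div_cancel' hd (gcd_dvd_right g b)
  have hcop : IsCoprime (g / d) (b / d) := isCoprime_div_gcd_div_gcd_of_gcd_ne_zero hd
  calc g ∣ f * b ↔ d * (g / d) ∣ d * (f * (b / d)) := by rw [hgd, mul_left_comm, hbd]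
    _ ↔ g / d ∣ f * (b / d) := mul_dvd_mul_iff_left hd
    _ ↔ g / d ∣ f := ⟨hcop.dvd_of_dvd_mul_right, fun h => h.mul_right _⟩

theorem dvd_mul_finset_gcd_iff {α β : Type*} [CommMonoidWithZero α]
    [NormalizedGCDMonoid α] (s : Finset β) (a : β → α) (g f : α) : g ∣ f * s.gcd a ↔ ∀ k ∈ s, g ∣ f * a k := by
  rw [← (Finset.gcd_mul_left' s a f).dvd_iff_dvd_right, Finset.dvd_gcd_iff]

theorem mem_annihilator_span_adjoinRoot_mk_iff {F ι κ : Type*} [Field F] (g : ι → F[X])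
    (a : κ → ι → F[X]) (f : F[X]) :
    f ∈ (Submodule.span F[X] (Set.range fun k : κ =>
      (fun i => AdjoinRoot.mk (g i) (a k i) : ∀ i, AdjoinRoot (g i)))).annihilator ↔
      ∀ k i, g i ∣ f * a k i := by
  simp only [Submodule.mem_annihilator_span, Subtype.forall, Set.forall_mem_range, funext_iff,
    Pi.zero_apply, Algebra.smul_def]
  exact forall₂_congr fun k i => by rw [← AdjoinRoot.mk_eq_zero, map_mul]; rfl

theorem parityCheck_of_multiTwisted_general (F : Type*) [Field F]
    (ℓ ρ : ℕ) (m : Fin ℓ → ℕ) (hm : ∀ i, 0 < m i)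
    (Λ : Fin ℓ → F)
    (A : Fin ρ → Fin ℓ → Polynomial F)
    (Ccode : Submodule (Polynomial F)
      (∀ i, AdjoinRoot ((X : Polynomial F) ^ m i - C (Λ i))))
    (hCcode : Ccode = Submodule.span (Polynomial F)
      (Set.range fun κ => fun i => AdjoinRoot.mk ((X : Polynomial F) ^ m i - C (Λ i)) (A κ i))) :
    Ccode.annihilator = Ideal.span
      {Finset.univ.lcm fun i =>
        ((X : Polynomial F) ^ m i - C (Λ i)) /
          gcd ((X : Polynomial F) ^ m i - C (Λ i)) (Finset.univ.gcd fun κ => A κ i)} := by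
  subst hCcode
  ext f
  rw [mem_annihilator_span_adjoinRoot_mk_iff, Ideal.mem_span_singleton, Finset.lcm_dvd_iff,
    forall_comm]
  refine forall_congr' fun i => ?_
  rw [← dvd_mul_iff_div_gcd_dvd (X_pow_sub_C_ne_zero (hm i) _), dvd_mul_finset_gcd_iff]
  simp only [Finset.mem_univ, true_imp_iff]

/-- Let `C = ⟨a_1(x),…,a_ρ(x)⟩` be a `ρ`-generator `Λ`-multi-twisted code, with
`a_κ = (a_{κ,1}(x),…,a_{κ,ℓ}(x))`, and let
`w_i(x) = gcd(a_{1,i}(x),…,a_{ρ,i}(x), x^{m_i}−λ_i)`.  Then the annihilator ideal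
`Ann(C) = {f : f·a_κ = 0 in V for all κ}` is generated by the parity-check polynomial
`h(x) = lcm_{1≤i≤ℓ} [(x^{m_i}−λ_i)/w_i(x)]`. -/
theorem parityCheck_of_multiTwisted (F : Type*) [Field F] [Fintype F]
    (ℓ ρ : ℕ) (m : Fin ℓ → ℕ) (hm : ∀ i, 0 < m i)
    (hco : ∀ i, Nat.Coprime (m i) (Fintype.card F))
    (Λ : Fin ℓ → F) (hΛ : ∀ i, Λ i ≠ 0)
    (A : Fin ρ → Fin ℓ → Polynomial F)
    (Ccode : Submodule (Polynomial F)
      (∀ i, AdjoinRoot ((X : Polynomial F) ^ m i - C (Λ i))))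
    (hCcode : Ccode = Submodule.span (Polynomial F)
      (Set.range fun κ => fun i => AdjoinRoot.mk ((X : Polynomial F) ^ m i - C (Λ i)) (A κ i))) :
    Ccode.annihilator = Ideal.span
      {Finset.univ.lcm fun i =>
        ((X : Polynomial F) ^ m i - C (Λ i)) /
          gcd ((X : Polynomial F) ^ m i - C (Λ i)) (Finset.univ.gcd fun κ => A κ i)} :=
  parityCheck_of_multiTwisted_general F ℓ ρ m hm Λ A Ccode hCcode
end

section
/- Let C = ⟨a_1(x),…,a_ρ(x)⟩ be a ρ-generator Λ-multi-twisted code of length n over F_q. For each i let b_i be the maximum number of consecutive exponents among the zeros (in the appropriate splitting field) of gcd(a_{1,i}(x),…,a_{ρ,i}(x), x^{m_i}−λ_i). Then the minimum Hamming distance of C satisfies d_min(C) ≥ min_{1≤i≤ℓ} (b_i + 1). -/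
open Polynomial Finset
open scoped Classical

/-- The Hamming weight of a vector of `F^n = ∏ i, F^{m i}`. -/
noncomputable def mtWeight {F : Type*} [Field F] {ℓ : ℕ} (m : Fin ℓ → ℕ)
    (c : ∀ i, Fin (m i) → F) : ℕ :=
  ∑ i, (Finset.univ.filter fun j => c i j ≠ 0).card

/-!
On the `i`-th block the twisted shift is multiplication by `x` modulo `x^{m_i} - λ_i`, so
evaluating the block polynomial at a root `α` of `x^{m_i} - λ_i` turns the shift into
multiplication by `α`. Hence the `i`-th block of every codeword vanishes at each common root of
the generators' `i`-th blocks, in particular at the `b_i` points `δ_i ζ_i^{j_0+s}`. If a nonzero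
block had at most `b_i` nonzero coordinates, these vanishing conditions would be a square
transposed Vandermonde system in the distinct nodes `ζ_i^j` with a nonzero solution.
-/

open Function

theorem Matrix.eq_zero_of_forall_sum_mul_pow_eq_zero {R : Type*} [CommRing R] [IsDomain R]
    {n : ℕ} {f v : Fin n → R} (hf : Injective f)
    (hfv : ∀ j : Fin n, ∑ i, v i * f i ^ (j : ℕ) = 0) : v = 0 :=
  eq_zero_of_mulVec_eq_zero (by rwa [det_transpose, det_vandermonde_ne_zero_iff])
    (funext fun j => by simpa [mulVec, dotProduct, mul_comm] using hfv j)

theorem lt_card_support_of_sum_mul_pow_eq_zero {R ι : Type*} [CommRing R] [IsDomain R]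
    [Fintype ι] {f v : ι → R} (hf : Injective f) (hv : v ≠ 0) {b : ℕ}
    (hvf : ∀ s < b, ∑ i, v i * f i ^ s = 0) : b < #{i | v i ≠ 0} := by
  set S : Finset ι := {i | v i ≠ 0}
  by_contra! hS
  let e : Fin #S ≃ S := S.equivFin.symm
  have hvS : (fun t => v (e t)) = 0 := by
    refine Matrix.eq_zero_of_forall_sum_mul_pow_eq_zero (f := fun t => f (e t))
      (hf.comp (Subtype.val_injective.comp e.injective)) fun j => ?_
    rw [e.sum_comp (fun i : S => v i * f i ^ (j : ℕ)),
      S.sum_coe_sort (fun i => v i * f i ^ (j : ℕ)),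
      Finset.sum_filter_of_ne fun i _ hi => left_ne_zero_of_mul hi]
    exact hvf j (j.isLt.trans_le hS)
  obtain ⟨i, hi⟩ := Function.ne_iff.mp hv
  have := congrFun hvS (e.symm ⟨i, by simpa [S] using hi⟩)
  simp only [Equiv.apply_symm_apply, Pi.zero_apply] at this
  exact hi this

theorem lt_card_support_of_consecutive_zeros {R : Type*} [CommRing R] [IsDomain R]
    {M b j0 : ℕ} {a : Fin M → R} (ha : a ≠ 0) {δ ζ : R} (hδ : δ ≠ 0)
    (hζ : IsPrimitiveRoot ζ M)
    (hvanish : ∀ s < b, ∑ j, a j * (δ * ζ ^ (j0 + s)) ^ (j : ℕ) = 0) :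
    b < #{j | a j ≠ 0} := by
  have hM : 0 < M := Fin.pos_iff_nonempty.mpr (Function.ne_iff.mp ha).nonempty
  have hζj0 : δ * ζ ^ j0 ≠ 0 := mul_ne_zero hδ (pow_ne_zero _ (hζ.ne_zero hM.ne'))
  have hsupp : #{j | a j * (δ * ζ ^ j0) ^ (j : ℕ) ≠ 0} = #{j | a j ≠ 0} := by
    simp [hζj0]
  rw [← hsupp]
  refine lt_card_support_of_sum_mul_pow_eq_zero (f := fun j : Fin M => ζ ^ (j : ℕ))
    (fun j j' h => Fin.ext (hζ.pow_inj j.isLt j'.isLt h)) ?_ fun s hs => ?_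
  · simpa [funext_iff, hζj0] using ha
  · rw [← hvanish s hs]
    congr 1 with j
    ring

def twistShift {F : Type*} [Field F] {M : ℕ} (hM : 0 < M) (lam : F) (a : Fin M → F) :
    Fin M → F :=
  fun j => if (j : ℕ) = 0 then lam * a ⟨M - 1, Nat.sub_lt hM Nat.one_pos⟩
    else a ⟨(j : ℕ) - 1, lt_of_le_of_lt (Nat.sub_le _ _) j.isLt⟩

theorem blockPoly_twistShift {F : Type*} [Field F] {M : ℕ} (hM : 0 < M) (lam : F)
    (a : Fin M → F) :
    blockPoly (twistShift hM lam a) =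
      X * blockPoly a - C (a ⟨M - 1, Nat.sub_lt hM Nat.one_pos⟩) * (X ^ M - C lam) := by
  obtain ⟨n, rfl⟩ := Nat.exists_eq_add_one_of_ne_zero hM.ne'
  rw [blockPoly, blockPoly, Fin.sum_univ_succ, Fin.sum_univ_castSucc]
  have h0 : twistShift hM lam a 0 = lam * a (Fin.last n) := rfl
  have hsucc (j : Fin n) : twistShift hM lam a j.succ = a j.castSucc := rfl
  have hlast : (⟨n + 1 - 1, Nat.sub_lt hM Nat.one_pos⟩ : Fin (n + 1)) = Fin.last n := rfl
  simp only [h0, hsucc, hlast, Fin.val_zero, Fin.val_succ, Fin.val_castSucc, Fin.val_last,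
    map_mul]
  rw [mul_add, Finset.mul_sum]
  ring_nf

theorem aeval_blockPoly {F K : Type*} [Field F] [CommSemiring K] [Algebra F K] {n : ℕ}
    (a : Fin n → F) (x : K) :
    aeval x (blockPoly a) = ∑ j, algebraMap F K (a j) * x ^ (j : ℕ) := by
  simp [blockPoly]

@[simps]
noncomputable def blockPolyLinearMap {F : Type*} [Field F] (n : ℕ) :
    (Fin n → F) →ₗ[F] F[X] where
  toFun := blockPoly
  map_add' a a' := by simp [blockPoly, add_mul, Finset.sum_add_distrib]
  map_smul' r a := by simp [blockPoly, Finset.smul_sum, smul_eq_C_mul, mul_assoc]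

section MultiTwisted

variable {F K : Type*} [Field F] [CommRing K] [Algebra F K] {ℓ : ℕ} {m : Fin ℓ → ℕ}
  (hm : ∀ i, 0 < m i) (Λ : Fin ℓ → F)

theorem mtShift_apply (c : ∀ i, Fin (m i) → F) (i : Fin ℓ) :
    mtShift m hm Λ c i = twistShift (hm i) (Λ i) (c i) := rfl

theorem aeval_blockPoly_mtShift_iterate {i : Fin ℓ} {α : K}
    (hα : α ^ m i = algebraMap F K (Λ i)) (k : ℕ) (c : ∀ i, Fin (m i) → F) :
    aeval α (blockPoly ((mtShift m hm Λ)^[k] c i)) = α ^ k * aeval α (blockPoly (c i)) := by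
  induction k with
  | zero => simp
  | succ k ih =>
    rw [iterate_succ_apply', mtShift_apply, blockPoly_twistShift, map_sub, map_mul, map_mul,
      map_sub, ih]
    simp only [aeval_X, aeval_C, map_pow, hα, sub_self, mul_zero, sub_zero, pow_succ']
    ring

theorem aeval_blockPoly_eq_zero_of_mem_span {ρ : ℕ} (A : Fin ρ → ∀ i, Fin (m i) → F)
    {i : Fin ℓ} {α : K} (hα : α ^ m i = algebraMap F K (Λ i))
    (hA : ∀ κ, aeval α (blockPoly (A κ i)) = 0) {c : ∀ i, Fin (m i) → F}
    (hc : c ∈ Submodule.span F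
      {v | ∃ (κ : Fin ρ) (k : ℕ), v = (mtShift m hm Λ)^[k] (A κ)}) :
    aeval α (blockPoly (c i)) = 0 := by
  let φ : (∀ i, Fin (m i) → F) →ₗ[F] K :=
    (aeval α).toLinearMap ∘ₗ blockPolyLinearMap (m i) ∘ₗ LinearMap.proj i
  suffices Submodule.span F _ ≤ LinearMap.ker φ from this hc
  rw [Submodule.span_le]
  rintro _ ⟨κ, k, rfl⟩
  simp [φ, aeval_blockPoly_mtShift_iterate hm Λ hα, hA]

end MultiTwisted

theorem multiTwisted_BCH_bound_general (F K : Type*) [Field F] [Field K]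
    [Algebra F K]
    (ℓ ρ : ℕ) (m : Fin ℓ → ℕ) (hm : ∀ i, 0 < m i) (hℓ : 0 < ℓ)
    (Λ : Fin ℓ → F) (hΛ : ∀ i, Λ i ≠ 0)
    (δ ζ : Fin ℓ → K) (hδ : ∀ i, δ i ^ m i = algebraMap F K (Λ i))
    (hζ : ∀ i, IsPrimitiveRoot (ζ i) (m i))
    (A : Fin ρ → ∀ i, Fin (m i) → F)
    (Ccode : Submodule F (∀ i, Fin (m i) → F))
    (hCcode : Ccode = Submodule.span F
      {v | ∃ (κ : Fin ρ) (jj : ℕ), v = (mtShift m hm Λ)^[jj] (A κ)})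
    (b : Fin ℓ → ℕ)
    (hb : ∀ i, ∃ j0 : ℕ, ∀ s < b i,
      (Polynomial.aeval (δ i * ζ i ^ (j0 + s)))
        (gcd ((X : Polynomial F) ^ m i - C (Λ i))
          (Finset.univ.gcd fun κ => blockPoly (A κ i))) = 0) :
    ∀ c ∈ Ccode, c ≠ 0 →
      (Finset.univ.inf' ⟨⟨0, hℓ⟩, Finset.mem_univ _⟩ fun i => b i + 1) ≤ mtWeight m c := by
  intro c hc hc0
  obtain ⟨i, hi⟩ := Function.ne_iff.mp hc0
  obtain ⟨j0, hj0⟩ := hb i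
  have hδ0 : δ i ≠ 0 := by
    intro h
    have h' := hδ i
    rw [h, zero_pow (hm i).ne', eq_comm, map_eq_zero_iff _ (algebraMap F K).injective] at h'
    exact hΛ i h'
  have hroot (s : ℕ) : (δ i * ζ i ^ (j0 + s)) ^ m i = algebraMap F K (Λ i) := by
    rw [mul_pow, hδ, ← pow_mul, mul_comm (j0 + s), pow_mul, (hζ i).pow_eq_one, one_pow, mul_one]
  have hgcd (κ : Fin ρ) : gcd ((X : F[X]) ^ m i - C (Λ i))
      (univ.gcd fun κ => blockPoly (A κ i)) ∣ blockPoly (A κ i) :=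
    (gcd_dvd_right _ _).trans (Finset.gcd_dvd (mem_univ κ))
  have hvanish (s : ℕ) (hs : s < b i) :
      aeval (δ i * ζ i ^ (j0 + s)) (blockPoly (c i)) = 0 :=
    aeval_blockPoly_eq_zero_of_mem_span hm Λ A (hroot s)
      (fun κ => aeval_eq_zero_of_dvd_aeval_eq_zero (hgcd κ) (hj0 s hs))
      (by rwa [hCcode] at hc)
  have hbound : b i < #{j | c i j ≠ 0} := by
    simpa using lt_card_support_of_consecutive_zeros
      (a := fun j => algebraMap F K (c i j)) (by simpa [funext_iff] using hi) hδ0 (hζ i)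
      (by simpa [aeval_blockPoly] using hvanish)
  calc _ ≤ b i + 1 := inf'_le _ (mem_univ i)
    _ ≤ #{j | c i j ≠ 0} := hbound
    _ ≤ mtWeight m c :=
      single_le_sum (f := fun i => #{j | c i j ≠ 0}) (fun _ _ => Nat.zero_le _) (mem_univ i)

/-- BCH type bound: let `C = ⟨a_1(x),…,a_ρ(x)⟩` be a `ρ`-generator `Λ`-multi-twisted
code.  The zeros of `x^{m_i} − λ_i` in a splitting field `K` are `δ_i ζ_i^j` with `ζ_i`
a primitive `m_i`-th root of unity and `δ_i^{m_i} = λ_i`.  If for each `i` the polynomial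
`w_i = gcd(a_{1,i},…,a_{ρ,i}, x^{m_i}−λ_i)` has `b_i` zeros with consecutive exponents,
then every nonzero codeword of `C` has Hamming weight at least `min_i (b_i + 1)`. -/
theorem multiTwisted_BCH_bound (F K : Type*) [Field F] [Fintype F] [Field K]
    [Algebra F K]
    (ℓ ρ : ℕ) (m : Fin ℓ → ℕ) (hm : ∀ i, 0 < m i) (hℓ : 0 < ℓ)
    (hco : ∀ i, Nat.Coprime (m i) (Fintype.card F))
    (Λ : Fin ℓ → F) (hΛ : ∀ i, Λ i ≠ 0)
    (δ ζ : Fin ℓ → K) (hδ : ∀ i, δ i ^ m i = algebraMap F K (Λ i))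
    (hζ : ∀ i, IsPrimitiveRoot (ζ i) (m i))
    (A : Fin ρ → ∀ i, Fin (m i) → F)
    (Ccode : Submodule F (∀ i, Fin (m i) → F))
    (hCcode : Ccode = Submodule.span F
      {v | ∃ (κ : Fin ρ) (jj : ℕ), v = (mtShift m hm Λ)^[jj] (A κ)})
    (b : Fin ℓ → ℕ)
    (hb : ∀ i, ∃ j0 : ℕ, ∀ s < b i,
      (Polynomial.aeval (δ i * ζ i ^ (j0 + s)))
        (gcd ((X : Polynomial F) ^ m i - C (Λ i))
          (Finset.univ.gcd fun κ => blockPoly (A κ i))) = 0) :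
    ∀ c ∈ Ccode, c ≠ 0 →
      (Finset.univ.inf' ⟨⟨0, hℓ⟩, Finset.mem_univ _⟩ fun i => b i + 1) ≤ mtWeight m c :=
  multiTwisted_BCH_bound_general F K ℓ ρ m hm hℓ Λ hΛ δ ζ hδ hζ A Ccode hCcode b hb
end

section
/- Let C be a linear code of length n = m_1+⋯+m_ℓ over F_q that is simultaneously Λ-multi-twisted and Ω-multi-twisted, where Λ=(λ_1,…,λ_ℓ), Ω=(ω_1,…,ω_ℓ) have all entries nonzero. Let J_C = {i : π_i(C) ≠ 0} and I_{Λ,Ω} = {i : λ_i ≠ ω_i}. If I_{Λ,Ω} ∩ J_C ≠ ∅, then dim_{F_q} C ≥ max_{i ∈ I_{Λ,Ω} ∩ J_C} m_i. -/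
open Finset

/-- Iterating the shift `r` times, without wrap-around. -/
lemma mtShift_iterate_of_le {F : Type*} [Field F] {ℓ : ℕ} {m : Fin ℓ → ℕ} (hm : ∀ i, 0 < m i)
    (Λ : Fin ℓ → F) (c : ∀ i, Fin (m i) → F) (i : Fin ℓ) :
    ∀ r : ℕ, ∀ j : Fin (m i), r ≤ (j : ℕ) →
      (mtShift m hm Λ)^[r] c i j
        = c i ⟨(j : ℕ) - r, lt_of_le_of_lt (Nat.sub_le _ _) j.isLt⟩ := by
  intro r
  induction r with
  | zero => intro j _; simp
  | succ r ih =>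
    intro j hj
    rw [Function.iterate_succ_apply']
    have hj0 : (j : ℕ) ≠ 0 := by omega
    have hlt : (j : ℕ) - 1 < m i := lt_of_le_of_lt (Nat.sub_le _ _) j.isLt
    have : mtShift m hm Λ ((mtShift m hm Λ)^[r] c) i j
        = (mtShift m hm Λ)^[r] c i ⟨(j : ℕ) - 1, hlt⟩ := by
      simp [mtShift, hj0]
    rw [this, ih ⟨(j : ℕ) - 1, hlt⟩ (by simp; omega)]
    congr 1
    simp
    omega

/-- Iterating the shift `r ≤ m i` times, with exactly one wrap-around. -/
lemma mtShift_iterate_of_lt {F : Type*} [Field F] {ℓ : ℕ} {m : Fin ℓ → ℕ} (hm : ∀ i, 0 < m i)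
    (Λ : Fin ℓ → F) (c : ∀ i, Fin (m i) → F) (i : Fin ℓ) :
    ∀ r : ℕ, r ≤ m i → ∀ j t : Fin (m i), (j : ℕ) < r → (t : ℕ) + r = (j : ℕ) + m i →
      (mtShift m hm Λ)^[r] c i j = Λ i * c i t := by
  intro r
  induction r with
  | zero => intro _ j t hj _; omega
  | succ r ih =>
    intro hr j t hj ht
    rw [Function.iterate_succ_apply']
    by_cases hj0 : (j : ℕ) = 0
    · have : mtShift m hm Λ ((mtShift m hm Λ)^[r] c) i j
          = Λ i * (mtShift m hm Λ)^[r] c i ⟨m i - 1, Nat.sub_lt (hm i) Nat.one_pos⟩ := by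
        simp [mtShift, hj0]
      rw [this, mtShift_iterate_of_le hm Λ c i r ⟨m i - 1, Nat.sub_lt (hm i) Nat.one_pos⟩
        (by simp only [Fin.val_mk]; omega)]
      refine congrArg (fun u => Λ i * c i u) (Fin.ext ?_)
      simp only [Fin.val_mk]
      omega
    · have hlt : (j : ℕ) - 1 < m i := lt_of_le_of_lt (Nat.sub_le _ _) j.isLt
      have : mtShift m hm Λ ((mtShift m hm Λ)^[r] c) i j
          = (mtShift m hm Λ)^[r] c i ⟨(j : ℕ) - 1, hlt⟩ := by
        simp [mtShift, hj0]
      rw [this]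
      exact ih (by omega) ⟨(j : ℕ) - 1, hlt⟩ t (by simp only [Fin.val_mk]; omega)
        (by simp only [Fin.val_mk]; omega)

lemma mtShift_iterate_mem {F : Type*} [Field F] {ℓ : ℕ} {m : Fin ℓ → ℕ} {hm : ∀ i, 0 < m i}
    {Λ : Fin ℓ → F} {Ccode : Submodule F (∀ i, Fin (m i) → F)}
    (hCΛ : ∀ c ∈ Ccode, mtShift m hm Λ c ∈ Ccode) :
    ∀ r : ℕ, ∀ c ∈ Ccode, (mtShift m hm Λ)^[r] c ∈ Ccode := by
  intro r
  induction r with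
  | zero => intro c hc; simpa using hc
  | succ r ih =>
    intro c hc
    rw [Function.iterate_succ_apply']
    exact hCΛ _ (ih c hc)

/-- If a linear code `C` is simultaneously `Λ`-multi-twisted and `Ω`-multi-twisted and,
for some `i` with `λ_i ≠ ω_i`, the projection of `C` to the `i`-th block is nonzero, then
`dim_{F_q} C ≥ m_i` (hence `dim C ≥ max` of such `m_i`). -/
theorem dim_of_biMultiTwisted (F : Type*) [Field F] [Fintype F]
    (ℓ : ℕ) (m : Fin ℓ → ℕ) (hm : ∀ i, 0 < m i)
    (hco : ∀ i, Nat.Coprime (m i) (Fintype.card F))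
    (Λ Ω : Fin ℓ → F) (hΛ : ∀ i, Λ i ≠ 0) (hΩ : ∀ i, Ω i ≠ 0)
    (Ccode : Submodule F (∀ i, Fin (m i) → F))
    (hCΛ : ∀ c ∈ Ccode, mtShift m hm Λ c ∈ Ccode)
    (hCΩ : ∀ c ∈ Ccode, mtShift m hm Ω c ∈ Ccode) :
    ∀ i : Fin ℓ, Λ i ≠ Ω i → (∃ c ∈ Ccode, c i ≠ 0) →
      m i ≤ Module.finrank F Ccode := by
  intro i hne ⟨c, hc, hci⟩
  obtain ⟨j, hj⟩ := Function.ne_iff.mp hci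
  -- shift `c` so that the last coordinate of block `i` is nonzero
  set s : ℕ := m i - 1 - (j : ℕ) with hs
  set c' : ∀ k, Fin (m k) → F := (mtShift m hm Λ)^[s] c with hc'def
  have hc' : c' ∈ Ccode := mtShift_iterate_mem hCΛ s c hc
  have hlastidx : m i - 1 < m i := Nat.sub_lt (hm i) Nat.one_pos
  have hlast : c' i ⟨m i - 1, hlastidx⟩ ≠ 0 := by
    rw [hc'def, mtShift_iterate_of_le hm Λ c i s ⟨m i - 1, hlastidx⟩
      (Nat.sub_le _ _)]
    have : (⟨m i - 1 - s, lt_of_le_of_lt (Nat.sub_le _ _) hlastidx⟩ : Fin (m i)) = j := by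
      apply Fin.ext
      simp [hs]
      have := j.isLt
      omega
    rw [this]
    simpa using hj
  -- the difference vector, supported at position 0 of each block
  set d : ∀ k, Fin (m k) → F := mtShift m hm Λ c' - mtShift m hm Ω c' with hddef
  have hd : d ∈ Ccode := Submodule.sub_mem _ (hCΛ _ hc') (hCΩ _ hc')
  have hd0 : d i ⟨0, hm i⟩ = (Λ i - Ω i) * c' i ⟨m i - 1, hlastidx⟩ := by
    simp [hddef, mtShift]
    ring
  have hdne : d i ⟨0, hm i⟩ ≠ 0 := by
    rw [hd0]
    exact mul_ne_zero (sub_ne_zero.mpr hne) hlast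
  have hdz : ∀ t : Fin (m i), (t : ℕ) ≠ 0 → d i t = 0 := by
    intro t ht
    simp [hddef, mtShift, ht]
  -- the family of shifted vectors
  set w : Fin (m i) → (∀ k, Fin (m k) → F) := fun r => (mtShift m hm Λ)^[(r : ℕ)] d with hwdef
  have hwr : ∀ r : Fin (m i), w r i r = d i ⟨0, hm i⟩ := by
    intro r
    simp only [hwdef]
    rw [mtShift_iterate_of_le hm Λ d i (r : ℕ) r le_rfl]
    congr 1
    simp
  have hwne : ∀ r t : Fin (m i), t ≠ r → w r i t = 0 := by
    intro r t htr
    simp only [hwdef]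
    rcases lt_or_ge (t : ℕ) (r : ℕ) with h | h
    · have hb : (t : ℕ) + m i - (r : ℕ) < m i := by
        have := t.isLt; have := r.isLt; omega
      rw [mtShift_iterate_of_lt hm Λ d i (r : ℕ) (le_of_lt r.isLt) t
        ⟨(t : ℕ) + m i - (r : ℕ), hb⟩ h
        (by simp only [Fin.val_mk]; have := r.isLt; omega)]
      rw [hdz ⟨(t : ℕ) + m i - (r : ℕ), hb⟩
        (by simp only [Fin.val_mk]; have := r.isLt; omega)]
      ring
    · rw [mtShift_iterate_of_le hm Λ d i (r : ℕ) t h]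
      apply hdz
      simp
      intro habs
      exact htr (Fin.ext (by omega))
  have hwmem : ∀ r : Fin (m i), w r ∈ Ccode := fun r =>
    mtShift_iterate_mem hCΛ (r : ℕ) d hd
  have hw : LinearIndependent F w := by
    rw [Fintype.linearIndependent_iff]
    intro g hg r
    have h2 : (∑ x, g x • w x) i r = 0 := by rw [hg]; simp
    rw [Finset.sum_apply, Finset.sum_apply] at h2
    have h3 : ∑ x, g x * w x i r = 0 := by
      simpa [smul_eq_mul] using h2
    rw [Finset.sum_eq_single r (fun x _ hx => by rw [hwne x r (Ne.symm hx)]; ring)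
      (fun h => absurd (Finset.mem_univ r) h)] at h3
    rw [hwr r] at h3
    exact (mul_eq_zero.mp h3).resolve_right hdne
  -- conclude via the span of the `w r`
  have hspan : Submodule.span F (Set.range w) ≤ Ccode := by
    rw [Submodule.span_le]
    rintro _ ⟨r, rfl⟩
    exact hwmem r
  calc m i = Fintype.card (Fin (m i)) := (Fintype.card_fin _).symm
    _ = Module.finrank F (Submodule.span F (Set.range w)) :=
        (finrank_span_eq_card hw).symm
    _ ≤ Module.finrank F Ccode := Submodule.finrank_mono hspan
end

section
/- If λ_i ≠ λ_i^{-1} for all i and the polynomials x^{m_1}−λ_1,…,x^{m_ℓ}−λ_ℓ are pairwise coprime in F_q[x], then every Λ-multi-twisted code of length n over F_q is LCD. -/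
/-!
Write `T` for the `λ`-constacyclic shift on `F^m` and `T'` for the `λ⁻¹`-constacyclic one. They
satisfy `⟨T' x, T y⟩ = ⟨x, y⟩`, and `T` is invertible with inverse a polynomial in `T` (as
`T^m = λ`), so the orthogonal complement of a `T`-invariant subspace is `T'`-invariant.

Pairwise coprimality of the `x^{m_i} - λ_i` yields polynomials acting as the identity on block `i`
and as zero on the other blocks; applying them to a codeword of `C ∩ C^⊥` reduces the theorem to
a single block: a vector `a ∈ F^m` orthogonal to its cyclic subspace `F[T] a`. Then
`F[T'] a ⊆ (F[T] a)^⊥`, so `dim F[T] a + dim F[T'] a ≤ m`. On the other hand, reading `a` as a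
polynomial `a(x)` of degree `< m`, on which `T` acts as multiplication by `x` modulo `x^m - λ`, gives
`dim F[T] a ≥ m - deg gcd(x^m - λ, a(x))`, and likewise for `λ⁻¹`. As `λ ≠ λ⁻¹`, the two gcds are
coprime divisors of `a(x)`, so for `a ≠ 0` their degrees add up to less than `m`: a contradiction.
-/

open Finset

/-- The dual code `C^⊥` with respect to the standard inner product. -/
def mtDual {F : Type*} [Field F] {ℓ : ℕ} {m : Fin ℓ → ℕ}
    (C : Submodule F (∀ i, Fin (m i) → F)) : Submodule F (∀ i, Fin (m i) → F) where
  carrier := {a | ∀ c ∈ C, mtInner m a c = 0}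
  zero_mem' := by intro c hc; simp [mtInner]
  add_mem' := by
    intro a b ha hb c hc
    have h1 := ha c hc
    have h2 := hb c hc
    simp only [mtInner, Pi.add_apply, add_mul, Finset.sum_add_distrib] at h1 h2 ⊢
    rw [h1, h2, add_zero]
  smul_mem' := by
    intro t a ha c hc
    have h1 := ha c hc
    simp only [mtInner, Pi.smul_apply, smul_eq_mul, mul_assoc, ← Finset.mul_sum] at h1 ⊢
    rw [h1, mul_zero]

open Polynomial

section CyclicSubspace

variable {F V : Type*} [Field F] [AddCommGroup V] [Module F V]

noncomputable def cyclicSubspace (T : Module.End F V) (a : V) : Submodule F V :=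
  LinearMap.range (LinearMap.applyₗ a ∘ₗ (aeval T).toLinearMap)

theorem aeval_mem_cyclicSubspace {T : Module.End F V} {a v : V} (p : F[X])
    (hv : v ∈ cyclicSubspace T a) : aeval T p v ∈ cyclicSubspace T a := by
  obtain ⟨q, rfl⟩ := hv
  exact ⟨p * q, by simp [Module.End.mul_apply]⟩

theorem le_finrank_cyclicSubspace [FiniteDimensional F V] {T : Module.End F V} {a : V} {k : ℕ}
    (h : ∀ p : F[X], p.degree < k → aeval T p a = 0 → p = 0) :
    k ≤ Module.finrank F (cyclicSubspace T a) := by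
  let φ := (LinearMap.applyₗ a ∘ₗ (aeval T).toLinearMap) ∘ₗ (degreeLT F k).subtype
  have hφ : Function.Injective φ := by
    rw [← LinearMap.ker_eq_bot, LinearMap.ker_eq_bot']
    rintro ⟨p, hp⟩ hp0
    exact Subtype.ext (h p (mem_degreeLT.mp hp) hp0)
  calc k = Module.finrank F (degreeLT F k) := by simp [(degreeLTEquiv F k).finrank_eq]
    _ = Module.finrank F (LinearMap.range φ) := (LinearMap.finrank_range_of_inj hφ).symm
    _ ≤ _ := Submodule.finrank_mono (LinearMap.range_comp_le_range _ _)

end CyclicSubspace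

theorem aeval_piMap_apply {R ι : Type*} [CommSemiring R] {φ : ι → Type*}
    [∀ i, AddCommMonoid (φ i)] [∀ i, Module R (φ i)] (T : ∀ i, Module.End R (φ i)) (p : R[X])
    (c : ∀ i, φ i) (i : ι) :
    aeval (LinearMap.piMap T) p c i = aeval (T i) p (c i) := by
  induction p using Polynomial.induction_on generalizing c with
  | C a => simp
  | add p q hp hq => simp [hp, hq]
  | monomial n a ih =>
    rw [pow_succ, ← mul_assoc, map_mul _ _ X, map_mul _ _ X, aeval_X, aeval_X,
      Module.End.mul_apply, Module.End.mul_apply, ih]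
    rfl

theorem dotProductBilin_nondegenerate {F ι : Type*} [Field F] [Fintype ι] :
    LinearMap.BilinForm.Nondegenerate (dotProductBilin F F : LinearMap.BilinForm F (ι → F)) := by
  rw [LinearMap.BilinForm.nondegenerate_iff_ker_eq_bot, LinearMap.ker_eq_bot']
  exact fun x hx => dotProduct_eq_zero x fun y => LinearMap.congr_fun hx y

theorem exists_dvd_sub_one_and_forall_dvd {R ι : Type*} [CommRing R] [Fintype ι] [DecidableEq ι]
    {f : ι → R} (hf : Pairwise fun i j => IsCoprime (f i) (f j)) (i : ι) :
    ∃ e : R, f i ∣ e - 1 ∧ ∀ j ≠ i, f j ∣ e := by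
  obtain ⟨s, t, hst⟩ := IsCoprime.prod_right (x := f i) (s := f) (t := Finset.univ.erase i)
    fun j hj => hf (Finset.ne_of_mem_erase hj).symm
  refine ⟨t * ∏ j ∈ Finset.univ.erase i, f j, ⟨-s, by linear_combination hst⟩, fun j hj => ?_⟩
  exact (Finset.dvd_prod_of_mem f (Finset.mem_erase.mpr ⟨hj, Finset.mem_univ j⟩)).mul_left t

theorem natDegree_le_natDegree_gcd_add_of_dvd_mul {F : Type*} [Field F] [DecidableEq F]
    {f p q : F[X]} (hp : p ≠ 0) (h : f ∣ p * q) :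
    f.natDegree ≤ (gcd f q).natDegree + p.natDegree := by
  rcases eq_or_ne f 0 with rfl | hf
  · simp
  have hg : gcd f q ≠ 0 := gcd_ne_zero_of_left hf
  rw [← natDegree_mul hg hp]
  exact natDegree_le_of_dvd (dvd_gcd_mul_of_dvd_mul (mul_comm p q ▸ h)) (mul_ne_zero hg hp)

theorem isCoprime_sub_C_sub_C {F : Type*} [Field F] (p : F[X]) {a b : F} (h : a ≠ b) :
    IsCoprime (p - C a) (p - C b) := by
  have hba : b - a ≠ 0 := sub_ne_zero.mpr h.symm
  refine ⟨C (b - a)⁻¹, -C (b - a)⁻¹, ?_⟩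
  calc C (b - a)⁻¹ * (p - C a) + -C (b - a)⁻¹ * (p - C b) = C ((b - a)⁻¹ * (b - a)) := by
        simp only [map_mul, map_sub]; ring
    _ = 1 := by rw [inv_mul_cancel₀ hba, map_one]

section Constacyclic

variable {F : Type*} [Field F]

def constaShift (m : ℕ) (hm : 0 < m) (lam : F) : Module.End F (Fin m → F) where
  toFun b j :=
    if (j : ℕ) = 0 then lam * b ⟨m - 1, Nat.sub_lt hm Nat.one_pos⟩
    else b ⟨(j : ℕ) - 1, lt_of_le_of_lt (Nat.sub_le _ _) j.isLt⟩
  map_add' x y := by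
    funext j; by_cases h : (j : ℕ) = 0 <;> simp [h, mul_add]
  map_smul' r x := by
    funext j; by_cases h : (j : ℕ) = 0 <;> simp [h, mul_left_comm]

variable (F) in
noncomputable def toPoly (m : ℕ) : (Fin m → F) →ₗ[F] F[X] :=
  (degreeLT F m).subtype ∘ₗ (degreeLTEquiv F m).symm.toLinearMap

variable {m : ℕ} (hm : 0 < m)

theorem constaShift_apply (lam : F) (b : Fin m → F) (j : Fin m) :
    constaShift m hm lam b j =
      if (j : ℕ) = 0 then lam * b ⟨m - 1, Nat.sub_lt hm Nat.one_pos⟩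
      else b ⟨(j : ℕ) - 1, lt_of_le_of_lt (Nat.sub_le _ _) j.isLt⟩ :=
  rfl

theorem constaShift_inv_dotProduct_constaShift {lam : F} (hlam : lam ≠ 0) (x y : Fin m → F) :
    constaShift m hm lam⁻¹ x ⬝ᵥ constaShift m hm lam y = x ⬝ᵥ y := by
  obtain ⟨n, rfl⟩ := Nat.exists_eq_add_one_of_ne_zero hm.ne'
  rw [dotProduct, dotProduct, Fin.sum_univ_succ, Fin.sum_univ_castSucc, add_comm]
  simp only [constaShift_apply, Fin.val_zero, Fin.val_succ, if_true, Nat.add_one_ne_zero, if_false,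
    Nat.add_sub_cancel]
  rw [mul_mul_mul_comm, inv_mul_cancel₀ hlam, one_mul]
  rfl

theorem degree_toPoly_lt (b : Fin m → F) : (toPoly F m b).degree < m :=
  mem_degreeLT.mp ((degreeLTEquiv F m).symm b).2

theorem toPoly_injective : Function.Injective (toPoly F m) :=
  Subtype.val_injective.comp (degreeLTEquiv F m).symm.injective

theorem coeff_toPoly (b : Fin m → F) (n : ℕ) :
    (toPoly F m b).coeff n = if h : n < m then b ⟨n, h⟩ else 0 := by
  split_ifs with h
  · exact congrFun ((degreeLTEquiv F m).apply_symm_apply b) ⟨n, h⟩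
  · exact coeff_eq_zero_of_degree_lt ((degree_toPoly_lt b).trans_le (by exact_mod_cast not_lt.mp h))

theorem toPoly_constaShift (lam : F) (b : Fin m → F) :
    toPoly F m (constaShift m hm lam b) =
      X * toPoly F m b - C (b ⟨m - 1, Nat.sub_lt hm Nat.one_pos⟩) * (X ^ m - C lam) := by
  ext (_ | n)
  · simp [coeff_toPoly, hm, constaShift_apply, hm.ne, mul_comm]
  · simp only [coeff_sub, coeff_X_mul, coeff_C_mul, coeff_toPoly, coeff_X_pow, coeff_C,
      constaShift_apply]
    split_ifs <;> (try subst_vars) <;> simp_all <;> omega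

theorem mk_toPoly_aeval_constaShift (lam : F) (p : F[X]) (b : Fin m → F) :
    AdjoinRoot.mk (X ^ m - C lam) (toPoly F m (aeval (constaShift m hm lam) p b)) =
      AdjoinRoot.mk (X ^ m - C lam) (p * toPoly F m b) := by
  induction p using Polynomial.induction_on generalizing b with
  | C a => simp [smul_eq_C_mul]
  | add p q hp hq => simp [hp, hq, add_mul]
  | monomial n a ih =>
    rw [pow_succ, ← mul_assoc, map_mul, aeval_X, Module.End.mul_apply, ih, toPoly_constaShift,
      AdjoinRoot.mk_eq_mk]
    exact ⟨-(C a * X ^ n * C (b _)), by ring⟩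

theorem aeval_constaShift_eq_zero_iff (lam : F) (p : F[X]) (b : Fin m → F) :
    aeval (constaShift m hm lam) p b = 0 ↔ X ^ m - C lam ∣ p * toPoly F m b := by
  rw [← AdjoinRoot.mk_eq_zero, ← mk_toPoly_aeval_constaShift hm, AdjoinRoot.mk_eq_zero]
  refine ⟨fun h => by simp [h], fun h => toPoly_injective ?_⟩
  rw [map_zero]
  refine eq_zero_of_dvd_of_degree_lt h ?_
  rw [degree_X_pow_sub_C (R := F) hm lam]
  exact degree_toPoly_lt _

theorem aeval_constaShift_X_pow_sub_C (lam : F) :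
    aeval (constaShift m hm lam) (X ^ m - C lam) = 0 :=
  LinearMap.ext fun b => (aeval_constaShift_eq_zero_iff hm lam _ b).mpr (dvd_mul_right _ _)

theorem aeval_constaShift_eq_one_of_dvd_sub_one {lam : F} {e : F[X]} (he : X ^ m - C lam ∣ e - 1) :
    aeval (constaShift m hm lam) e = 1 := by
  have := aeval_eq_zero_of_dvd_aeval_eq_zero he (aeval_constaShift_X_pow_sub_C hm lam)
  rwa [map_sub, map_one, sub_eq_zero] at this

theorem constaShift_mul_aeval_eq_one {lam : F} (h0 : lam ≠ 0) :
    constaShift m hm lam * aeval (constaShift m hm lam) (C lam⁻¹ * X ^ (m - 1)) = 1 := by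
  have hX : X * (C lam⁻¹ * X ^ (m - 1)) = C lam⁻¹ * (X ^ m - C lam) + 1 := by
    rw [mul_left_comm, ← pow_succ', Nat.sub_add_cancel hm, mul_sub, ← map_mul,
      inv_mul_cancel₀ h0, map_one, sub_add_cancel]
  calc constaShift m hm lam * aeval (constaShift m hm lam) (C lam⁻¹ * X ^ (m - 1))
      = aeval (constaShift m hm lam) (X * (C lam⁻¹ * X ^ (m - 1))) := by
        rw [map_mul _ X, aeval_X]
    _ = 1 := by
      rw [hX, map_add, map_mul, aeval_constaShift_X_pow_sub_C, mul_zero, zero_add, map_one]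

theorem le_finrank_cyclicSubspace_constaShift [DecidableEq F] (lam : F) (a : Fin m → F) :
    m ≤ Module.finrank F (cyclicSubspace (constaShift m hm lam) a) +
      (gcd (X ^ m - C lam) (toPoly F m a)).natDegree := by
  suffices m - (gcd (X ^ m - C lam) (toPoly F m a)).natDegree ≤
      Module.finrank F (cyclicSubspace (constaShift m hm lam) a) by omega
  refine le_finrank_cyclicSubspace fun p hp hpa => by_contra fun hp0 => ?_
  have hdeg := natDegree_le_natDegree_gcd_add_of_dvd_mul hp0
    ((aeval_constaShift_eq_zero_iff hm lam p a).mp hpa)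
  rw [natDegree_X_pow_sub_C] at hdeg
  have := (natDegree_lt_iff_degree_lt hp0).mpr hp
  omega

theorem natDegree_gcd_add_natDegree_gcd_lt [DecidableEq F] {lam : F} (h2 : lam ≠ lam⁻¹)
    {a : Fin m → F} (ha : a ≠ 0) :
    (gcd (X ^ m - C lam) (toPoly F m a)).natDegree +
      (gcd (X ^ m - C lam⁻¹) (toPoly F m a)).natDegree < m := by
  have hq : toPoly F m a ≠ 0 := fun h => ha (toPoly_injective (h.trans (map_zero _).symm))
  have hcop := ((isCoprime_sub_C_sub_C (X ^ m) h2).of_isCoprime_of_dvd_left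
    (gcd_dvd_left _ (toPoly F m a))).of_isCoprime_of_dvd_right (gcd_dvd_left _ (toPoly F m a))
  have hdvd := hcop.mul_dvd (gcd_dvd_right _ _) (gcd_dvd_right _ _)
  rw [← natDegree_mul (gcd_ne_zero_of_right hq) (gcd_ne_zero_of_right hq)]
  exact (natDegree_le_of_dvd hdvd hq).trans_lt
    ((natDegree_lt_iff_degree_lt hq).mpr (degree_toPoly_lt a))

theorem cyclicSubspace_constaShift_inv_le_orthogonal {lam : F} (h0 : lam ≠ 0) {a : Fin m → F}
    (h : ∀ p : F[X], a ⬝ᵥ aeval (constaShift m hm lam) p a = 0) :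
    cyclicSubspace (constaShift m hm lam⁻¹) a ≤
      LinearMap.BilinForm.orthogonal (dotProductBilin F F)
        (cyclicSubspace (constaShift m hm lam) a) := by
  set T := constaShift m hm lam
  have ha : a ∈ LinearMap.BilinForm.orthogonal (dotProductBilin F F) (cyclicSubspace T a) := by
    rintro _ ⟨p, rfl⟩
    simpa [dotProduct_comm] using h p
  have hinv : LinearMap.BilinForm.orthogonal (dotProductBilin F F) (cyclicSubspace T a) ≤
      (LinearMap.BilinForm.orthogonal (dotProductBilin F F) (cyclicSubspace T a)).comap
        (constaShift m hm lam⁻¹) := by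
    rintro x hx w hw
    set S := aeval T (C lam⁻¹ * X ^ (m - 1))
    have hTS : T (S w) = w := by
      rw [← Module.End.mul_apply, constaShift_mul_aeval_eq_one hm h0, Module.End.one_apply]
    calc w ⬝ᵥ constaShift m hm lam⁻¹ x = constaShift m hm lam⁻¹ x ⬝ᵥ T (S w) := by
          rw [hTS, dotProduct_comm]
      _ = S w ⬝ᵥ x := by rw [constaShift_inv_dotProduct_constaShift hm h0, dotProduct_comm]
      _ = 0 := hx _ (aeval_mem_cyclicSubspace _ hw)
  rintro _ ⟨p, rfl⟩
  exact aeval_apply_smul_mem_of_le_comap ha p _ hinv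

theorem eq_zero_of_forall_dotProduct_aeval_constaShift_eq_zero {lam : F} (h0 : lam ≠ 0)
    (h2 : lam ≠ lam⁻¹) {a : Fin m → F}
    (h : ∀ p : F[X], a ⬝ᵥ aeval (constaShift m hm lam) p a = 0) : a = 0 := by
  classical
  by_contra ha
  have hle := Submodule.finrank_mono (cyclicSubspace_constaShift_inv_le_orthogonal hm h0 h)
  rw [LinearMap.BilinForm.finrank_orthogonal dotProductBilin_nondegenerate,
    Module.finrank_fin_fun] at hle
  have := le_finrank_cyclicSubspace_constaShift hm lam a
  have := le_finrank_cyclicSubspace_constaShift hm lam⁻¹ a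
  have := natDegree_gcd_add_natDegree_gcd_lt h2 ha
  omega

end Constacyclic

theorem mtInner_single {F : Type*} [Field F] {ℓ : ℕ} (m : Fin ℓ → ℕ) (c : ∀ i, Fin (m i) → F)
    (i : Fin ℓ) (v : Fin (m i) → F) : mtInner m c (Pi.single i v) = c i ⬝ᵥ v := by
  rw [mtInner, Finset.sum_eq_single i (fun j _ hji => by simp [Pi.single_eq_of_ne hji])
    (by simp)]
  simp [dotProduct]

open Polynomial in
theorem multiTwisted_LCD_of_pairwise_coprime_general (F : Type*) [Field F]
    (ℓ : ℕ) (m : Fin ℓ → ℕ) (hm : ∀ i, 0 < m i)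
    (Λ : Fin ℓ → F) (hΛ : ∀ i, Λ i ≠ 0) (hΛ2 : ∀ i, Λ i ≠ (Λ i)⁻¹)
    (hcop : ∀ i j, i ≠ j →
      IsCoprime ((X : Polynomial F) ^ m i - C (Λ i)) ((X : Polynomial F) ^ m j - C (Λ j)))
    (Ccode : Submodule F (∀ i, Fin (m i) → F))
    (hC : ∀ c ∈ Ccode, mtShift m hm Λ c ∈ Ccode) :
    Ccode ⊓ mtDual Ccode = ⊥ := by
  set T : ∀ i, Module.End F (Fin (m i) → F) := fun i => constaShift (m i) (hm i) (Λ i)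
  refine eq_bot_iff.mpr fun c hc => (Submodule.mem_bot F).mpr (funext fun i => ?_)
  obtain ⟨hcC, hcD⟩ := Submodule.mem_inf.mp hc
  refine eq_zero_of_forall_dotProduct_aeval_constaShift_eq_zero (hm i) (hΛ i) (hΛ2 i) fun p => ?_
  obtain ⟨e, hei, hej⟩ := exists_dvd_sub_one_and_forall_dvd hcop i
  have hsingle : aeval (LinearMap.piMap T) (e * p) c = Pi.single i (aeval (T i) p (c i)) := by
    funext j
    rw [aeval_piMap_apply, map_mul, Module.End.mul_apply]
    rcases eq_or_ne j i with rfl | hji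
    · rw [aeval_constaShift_eq_one_of_dvd_sub_one (hm j) hei, Module.End.one_apply,
        Pi.single_eq_same]
    · rw [aeval_eq_zero_of_dvd_aeval_eq_zero (hej j hji) (aeval_constaShift_X_pow_sub_C (hm j) _),
        LinearMap.zero_apply, Pi.single_eq_of_ne hji]
  -- `mtShift` is `LinearMap.piMap T` by definition, so `hC` says that `Ccode` is `piMap T`-stable.
  have hmem : aeval (LinearMap.piMap T) (e * p) c ∈ Ccode :=
    aeval_apply_smul_mem_of_le_comap hcC _ _ hC
  have := hcD _ hmem
  rwa [hsingle, mtInner_single] at this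

open Polynomial in
/-- If `λ_i ≠ λ_i^{-1}` for all `i` and the polynomials `x^{m_i} − λ_i` are pairwise
coprime in `F_q[x]`, then every `Λ`-multi-twisted code of length `n` over `F_q` is LCD. -/
theorem multiTwisted_LCD_of_pairwise_coprime (F : Type*) [Field F] [Fintype F]
    (ℓ : ℕ) (m : Fin ℓ → ℕ) (hm : ∀ i, 0 < m i)
    (hco : ∀ i, Nat.Coprime (m i) (Fintype.card F))
    (Λ : Fin ℓ → F) (hΛ : ∀ i, Λ i ≠ 0) (hΛ2 : ∀ i, Λ i ≠ (Λ i)⁻¹)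
    (hcop : ∀ i j, i ≠ j →
      IsCoprime ((X : Polynomial F) ^ m i - C (Λ i)) ((X : Polynomial F) ^ m j - C (Λ j)))
    (Ccode : Submodule F (∀ i, Fin (m i) → F))
    (hC : ∀ c ∈ Ccode, mtShift m hm Λ c ∈ Ccode) :
    Ccode ⊓ mtDual Ccode = ⊥ :=
  multiTwisted_LCD_of_pairwise_coprime_general F ℓ m hm Λ hΛ hΛ2 hcop Ccode hC
end

section
/- Let q be even, and let (G, [·,·]) be an ε-dimensional non-degenerate symmetric bilinear space over F_q in which [c,c] = 0 for every c in the hyperplane V_0 = {c : Σ_i c_i = 0}. If ε is odd, then the number of self-orthogonal subspaces of G equals Σ_{k=0}^{(ε−1)/2} [ (ε−1)/2 choose k ]_q ∏_{a=0}^{k−1} (q^{(ε−2a−1)/2} + 1). -/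
/-!
In characteristic 2 we have `x ⬝ᵥ x = (∑ i, x i) ^ 2`, so every self-orthogonal subspace lies in
the hyperplane `V₀ = 1ᗮ`, and the dot product is alternating on `V₀`. Since `1 ⬝ᵥ 1 = ε = 1`, it
is also nondegenerate there, so `V₀` is a symplectic space of dimension `2ν = ε - 1`.

In a symplectic space the `k`-dimensional totally isotropic subspaces are counted through their
ordered bases. A linearly independent isotropic `(a + 1)`-tuple is an `a`-tuple spanning some `U`
followed by a vector of `Uᗮ \ U`, so there are `∏_{a<k} (q^(2ν-a) - q^a)` such `k`-tuples, while a
`k`-dimensional space has `∏_{a<k} (q^k - q^a)` ordered bases. Their quotient is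
`[ν choose k]_q ∏_{a<k} (q^(ν-a) + 1)`, by the identity `[n choose k]_q ∏_{a<k} (q^(a+1) - 1) =
∏_{a<k} (q^(n-a) - 1)` and `q^(2ν-a) - q^a = q^a (q^(ν-a) - 1) (q^(ν-a) + 1)`.
-/

open Finset

open Module Submodule
open LinearMap (BilinForm)

theorem gaussBinom_mul_prod_pow_succ_sub_one (Q n k : ℕ) :
    (gaussBinom Q n k : ℤ) * ∏ a ∈ range k, ((Q : ℤ) ^ (a + 1) - 1) =
      ∏ a ∈ range k, ((Q : ℤ) ^ (n - a) - 1) := by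
  induction n generalizing k with
  | zero => cases k <;> simp [gaussBinom, prod_range_succ']
  | succ n ih =>
    cases k with
    | zero => simp [gaussBinom]
    | succ j =>
      set R := ∏ a ∈ range j, ((Q : ℤ) ^ (n - a) - 1)
      have hR : R * Q ^ (j + 1) * Q ^ (n - j) = R * Q ^ (n + 1) := by
        rcases le_or_gt j n with hjn | hnj
        · rw [mul_assoc, ← pow_add, show j + 1 + (n - j) = n + 1 by omega]
        · simp [R, prod_eq_zero (mem_range.2 hnj)]
      have ih₁ := ih (j + 1)
      rw [prod_range_succ, prod_range_succ] at ih₁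
      rw [prod_range_succ' (fun a => (Q : ℤ) ^ (n + 1 - a) - 1), prod_range_succ]
      simp only [gaussBinom, Nat.cast_add, Nat.cast_mul, Nat.cast_pow, Nat.add_sub_add_right,
        Nat.sub_zero]
      linear_combination ((Q : ℤ) ^ (j + 1) - 1) * ih j + (Q : ℤ) ^ (j + 1) * ih₁ + hR

theorem prod_pow_sub_pow_eq_gaussBinom_mul (Q : ℕ) {ν k : ℕ} (hQ : 0 < Q) (hk : k ≤ ν) :
    ∏ a ∈ range k, (Q ^ (2 * ν - a) - Q ^ a) =
      gaussBinom Q ν k * (∏ a ∈ range k, (Q ^ (ν - a) + 1)) * ∏ a ∈ range k, (Q ^ k - Q ^ a) := by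
  have cast_pow_sub_pow {m l : ℕ} (h : l ≤ m) : ((Q ^ m - Q ^ l : ℕ) : ℤ) = Q ^ m - Q ^ l := by
    rw [Nat.cast_sub (Nat.pow_le_pow_right hQ h), Nat.cast_pow, Nat.cast_pow]
  have hleft : ∏ a ∈ range k, ((Q : ℤ) ^ (2 * ν - a) - Q ^ a) = (∏ a ∈ range k, (Q : ℤ) ^ a) *
      (∏ a ∈ range k, ((Q : ℤ) ^ (ν - a) - 1)) * ∏ a ∈ range k, ((Q : ℤ) ^ (ν - a) + 1) := by
    rw [← prod_mul_distrib, ← prod_mul_distrib]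
    refine prod_congr rfl fun a ha => ?_
    have : 2 * ν - a = a + (ν - a) + (ν - a) := by have := mem_range.1 ha; omega
    rw [this, pow_add, pow_add]
    ring
  have hright : ∏ a ∈ range k, ((Q : ℤ) ^ k - Q ^ a) =
      (∏ a ∈ range k, (Q : ℤ) ^ a) * ∏ a ∈ range k, ((Q : ℤ) ^ (a + 1) - 1) := by
    rw [← prod_range_reflect (fun a => (Q : ℤ) ^ (a + 1) - 1), ← prod_mul_distrib]
    refine prod_congr rfl fun a ha => ?_
    have : (Q : ℤ) ^ k = Q ^ a * Q ^ (k - 1 - a + 1) := by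
      rw [← pow_add]; congr 1; have := mem_range.1 ha; omega
    rw [this]
    ring
  apply Nat.cast_injective (R := ℤ)
  simp only [Nat.cast_mul, Nat.cast_prod, Nat.cast_add, Nat.cast_pow, Nat.cast_one]
  rw [prod_congr rfl fun a ha => cast_pow_sub_pow (by have := mem_range.1 ha; omega),
    prod_congr rfl fun a ha => cast_pow_sub_pow (mem_range.1 ha).le, hleft, hright,
    ← gaussBinom_mul_prod_pow_succ_sub_one]
  ring

theorem card_sigma_eq_mul_of_forall_card_eq {α : Type*} {β : α → Type*} [Finite α]
    [∀ a, Finite (β a)] {c : ℕ} (h : ∀ a, Nat.card (β a) = c) :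
    Nat.card (Σ a, β a) = Nat.card α * c := by
  have := Fintype.ofFinite α
  rw [Nat.card_sigma, Finset.sum_congr rfl fun a _ => h a, sum_const, card_univ,
    Nat.card_eq_fintype_card, smul_eq_mul]

namespace Submodule

variable {K V : Type*} [Field K] [Fintype K] [AddCommGroup V] [Module K V] [Finite V]

theorem card_coe_diff_of_le {U W : Submodule K V} (h : U ≤ W) :
    Nat.card ↥((W : Set V) \ U) =
      Fintype.card K ^ finrank K W - Fintype.card K ^ finrank K U := by
  rw [Nat.card_coe_set_eq, Set.ncard_sdiff h, ← Nat.card_coe_set_eq, ← Nat.card_coe_set_eq,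
    SetLike.coe_sort_coe, SetLike.coe_sort_coe, natCard_eq_pow_finrank (K := K) (V := W),
    natCard_eq_pow_finrank (K := K) (V := U), Nat.card_eq_fintype_card]

def linearIndependentSpanEqEquiv {k : ℕ} (U : Submodule K V) (hU : finrank K U = k) :
    {s : Fin k → V // LinearIndependent K s ∧ span K (Set.range s) = U} ≃
      {t : Fin k → U // LinearIndependent K t} where
  toFun s := ⟨fun i => ⟨s.1 i, s.2.2.le (subset_span (Set.mem_range_self i))⟩,
    s.2.1.of_comp U.subtype⟩
  invFun t := ⟨U.subtype ∘ t.1, t.2.map' U.subtype (ker_subtype U), by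
    rw [Set.range_comp, ← map_span,
      t.2.span_eq_top_of_card_eq_finrank' (by rw [Fintype.card_fin, hU]), map_subtype_top]⟩
  left_inv _ := rfl
  right_inv _ := rfl

theorem card_linearIndependent_span_eq {k : ℕ} (U : Submodule K V) (hU : finrank K U = k) :
    Nat.card {s : Fin k → V // LinearIndependent K s ∧ span K (Set.range s) = U} =
      ∏ a ∈ range k, (Fintype.card K ^ k - Fintype.card K ^ a) := by
  rw [Nat.card_congr (linearIndependentSpanEqEquiv U hU), card_linearIndependent hU.ge, hU,
    Fin.prod_univ_eq_prod_range (fun a => Fintype.card K ^ k - Fintype.card K ^ a)]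

end Submodule

namespace LinearMap.BilinForm

section TotallyIsotropic

variable {K V : Type*} [Field K] [AddCommGroup V] [Module K V]

def IsTotallyIsotropic (B : BilinForm K V) (U : Submodule K V) : Prop :=
  ∀ x ∈ U, ∀ y ∈ U, B x y = 0

variable {B : BilinForm K V}

theorem isTotallyIsotropic_iff_le_orthogonal {U : Submodule K V} :
    B.IsTotallyIsotropic U ↔ U ≤ B.orthogonal U :=
  ⟨fun h x hx y hy => h y hy x hx, fun h _ hx _ hy => h hy _ hx⟩

theorem mem_orthogonal_span_iff {S : Set V} {v : V} :
    v ∈ B.orthogonal (span K S) ↔ ∀ y ∈ S, B y v = 0 := by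
  refine ⟨fun h y hy => h y (subset_span hy), fun h y hy => ?_⟩
  have : span K S ≤ LinearMap.ker (B.flip v) := span_le.2 h
  exact this hy

theorem isTotallyIsotropic_span_iff {S : Set V} :
    B.IsTotallyIsotropic (span K S) ↔ ∀ x ∈ S, ∀ y ∈ S, B x y = 0 := by
  rw [isTotallyIsotropic_iff_le_orthogonal, span_le]
  exact ⟨fun h x hx y hy => mem_orthogonal_span_iff.1 (h hy) x hx,
    fun h y hy => mem_orthogonal_span_iff.2 fun x hx => h x hx y hy⟩

theorem isTotallyIsotropic_span_insert_iff (hB : B.IsAlt) {S : Set V} {v : V} :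
    B.IsTotallyIsotropic (span K (insert v S)) ↔
      B.IsTotallyIsotropic (span K S) ∧ v ∈ B.orthogonal (span K S) := by
  simp only [isTotallyIsotropic_span_iff, mem_orthogonal_span_iff, Set.forall_mem_insert, hB v,
    true_and]
  constructor
  · rintro ⟨-, h⟩
    exact ⟨fun x hx => (h x hx).2, fun x hx => (h x hx).1⟩
  · rintro ⟨hS, hv⟩
    exact ⟨fun x hx => hB.eq_iff.2 (hv x hx), fun x hx => ⟨hv x hx, hS x hx⟩⟩

theorem isTotallyIsotropic_restrict_iff {W : Submodule K V} {U : Submodule K W} :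
    (B.restrict W).IsTotallyIsotropic U ↔ B.IsTotallyIsotropic (U.map W.subtype) := by
  simp [IsTotallyIsotropic]

def isTotallyIsotropicEquivRestrict (W : Submodule K V)
    (hW : ∀ U, B.IsTotallyIsotropic U → U ≤ W) :
    {U : Submodule K W // (B.restrict W).IsTotallyIsotropic U} ≃
      {U : Submodule K V // B.IsTotallyIsotropic U} :=
  ((MapSubtype.orderIso W).toEquiv.subtypeEquiv fun _ => isTotallyIsotropic_restrict_iff).trans
    (Equiv.subtypeSubtypeEquivSubtype (hW _))

variable (B) in
def isotropicTuples (k : ℕ) : Set (Fin k → V) :=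
  {s | LinearIndependent K s ∧ B.IsTotallyIsotropic (span K (Set.range s))}

theorem cons_mem_isotropicTuples_iff (hB : B.IsAlt) {k : ℕ} (v : V) (s : Fin k → V) :
    Fin.cons v s ∈ B.isotropicTuples (k + 1) ↔ s ∈ B.isotropicTuples k ∧
      v ∈ (B.orthogonal (span K (Set.range s)) : Set V) \ span K (Set.range s) := by
  simp only [isotropicTuples, Set.mem_ofPred_eq, linearIndependent_finCons, Fin.range_cons,
    isTotallyIsotropic_span_insert_iff hB, Set.mem_sdiff, SetLike.mem_coe]
  tauto

def isotropicTuplesSuccEquiv (hB : B.IsAlt) (k : ℕ) :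
    B.isotropicTuples (k + 1) ≃ Σ s : B.isotropicTuples k,
      ↥((B.orthogonal (span K (Set.range s.1)) : Set V) \ span K (Set.range s.1)) where
  toFun t :=
    have ht := (cons_mem_isotropicTuples_iff hB (t.1 0) (Fin.tail t.1)).1
      (by rw [Fin.cons_self_tail]; exact t.2)
    ⟨⟨Fin.tail t.1, ht.1⟩, ⟨t.1 0, ht.2⟩⟩
  invFun p := ⟨Fin.cons p.2.1 p.1.1, (cons_mem_isotropicTuples_iff hB _ _).2 ⟨p.1.2, p.2.2⟩⟩
  left_inv t := Subtype.ext (Fin.cons_self_tail t.1)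
  right_inv _ := rfl

def isotropicTuplesEquivSigma (k : ℕ) : B.isotropicTuples k ≃
    Σ U : {U : Submodule K V // B.IsTotallyIsotropic U ∧ finrank K U = k},
      {s : Fin k → V // LinearIndependent K s ∧ span K (Set.range s) = U} where
  toFun s :=
    ⟨⟨span K (Set.range s.1), s.2.2, by rw [finrank_span_eq_card s.2.1, Fintype.card_fin]⟩,
      s.1, s.2.1, by rfl⟩
  invFun p := ⟨p.2.1, p.2.2.1, by rw [p.2.2.2]; exact p.1.2.1⟩
  left_inv _ := rfl
  right_inv := by
    rintro ⟨⟨U, hU⟩, s, hs, hsU⟩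
    obtain rfl : span K (Set.range s) = U := hsU
    rfl

theorem IsTotallyIsotropic.two_mul_finrank_le [FiniteDimensional K V] (hnd : B.Nondegenerate)
    {U : Submodule K V} (hU : B.IsTotallyIsotropic U) : 2 * finrank K U ≤ finrank K V := by
  have := Submodule.finrank_mono (isTotallyIsotropic_iff_le_orthogonal.1 hU)
  rw [finrank_orthogonal hnd] at this
  have := U.finrank_le
  omega

variable [Fintype K] [Finite V]

local notation "q" => Fintype.card K

theorem card_isotropicTuples (hB : B.IsAlt) (hnd : B.Nondegenerate) (k : ℕ) :
    Nat.card (B.isotropicTuples k) = ∏ a ∈ Finset.range k, (q ^ (finrank K V - a) - q ^ a) := by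
  induction k with
  | zero =>
    have : B.isotropicTuples 0 = Set.univ := Set.eq_univ_of_forall fun s =>
      ⟨linearIndependent_empty_type, isTotallyIsotropic_span_iff.2 fun _ ⟨i, _⟩ => i.elim0⟩
    rw [this, Nat.card_univ, prod_range_zero, Nat.card_unique]
  | succ k ih =>
    rw [Nat.card_congr (isotropicTuplesSuccEquiv hB k),
      card_sigma_eq_mul_of_forall_card_eq (c := q ^ (finrank K V - k) - q ^ k) fun s => ?_, ih,
      prod_range_succ]
    have hs : finrank K (span K (Set.range s.1)) = k := by
      rw [finrank_span_eq_card s.2.1, Fintype.card_fin]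
    rw [card_coe_diff_of_le (isTotallyIsotropic_iff_le_orthogonal.1 s.2.2),
      finrank_orthogonal hnd, hs]

theorem card_isTotallyIsotropic_finrank_eq_mul (hB : B.IsAlt) (hnd : B.Nondegenerate) (k : ℕ) :
    Nat.card {U : Submodule K V // B.IsTotallyIsotropic U ∧ finrank K U = k} *
        ∏ a ∈ Finset.range k, (q ^ k - q ^ a) =
      ∏ a ∈ Finset.range k, (q ^ (finrank K V - a) - q ^ a) := by
  rw [← card_isotropicTuples hB hnd, Nat.card_congr (isotropicTuplesEquivSigma k)]
  exact (card_sigma_eq_mul_of_forall_card_eq fun U : {U // _} =>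
    card_linearIndependent_span_eq U.1 U.2.2).symm

theorem card_isTotallyIsotropic_finrank_eq (hB : B.IsAlt) (hnd : B.Nondegenerate) {ν k : ℕ}
    (hV : finrank K V = 2 * ν) (hk : k ≤ ν) :
    Nat.card {U : Submodule K V // B.IsTotallyIsotropic U ∧ finrank K U = k} =
      gaussBinom q ν k * ∏ a ∈ Finset.range k, (q ^ (ν - a) + 1) := by
  have hpos : 0 < ∏ a ∈ Finset.range k, (q ^ k - q ^ a) := prod_pos fun a ha =>
    Nat.sub_pos_of_lt (Nat.pow_lt_pow_right Fintype.one_lt_card (Finset.mem_range.1 ha))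
  apply Nat.eq_of_mul_eq_mul_right hpos
  rw [card_isTotallyIsotropic_finrank_eq_mul hB hnd, hV,
    prod_pow_sub_pow_eq_gaussBinom_mul _ Fintype.card_pos hk]

theorem card_isTotallyIsotropic (hB : B.IsAlt) (hnd : B.Nondegenerate) {ν : ℕ}
    (hV : finrank K V = 2 * ν) :
    Nat.card {U : Submodule K V // B.IsTotallyIsotropic U} =
      ∑ k ∈ Finset.range (ν + 1), gaussBinom q ν k * ∏ a ∈ Finset.range k, (q ^ (ν - a) + 1) := by
  classical
  have := Fintype.ofFinite (Submodule K V)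
  have hmaps : ∀ U ∈ univ.filter B.IsTotallyIsotropic, finrank K U ∈ Finset.range (ν + 1) :=
    fun U hU => Finset.mem_range_succ_iff.2 <| by
      have := (mem_filter.1 hU).2.two_mul_finrank_le hnd
      omega
  rw [Nat.card_eq_fintype_card, Fintype.card_subtype, card_eq_sum_card_fiberwise hmaps]
  refine sum_congr rfl fun k hk => ?_
  rw [filter_filter,
    ← card_isTotallyIsotropic_finrank_eq hB hnd hV (Finset.mem_range_succ_iff.1 hk),
    Nat.card_eq_fintype_card, Fintype.card_subtype]

end TotallyIsotropic

section DotProduct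

variable {K n : Type*} [Field K] [Fintype n]

local notation "𝔹" => (dotProductBilin K K : BilinForm K (n → K))

theorem dotProductBilin_isRefl : IsRefl 𝔹 :=
  fun x y h => by simpa [dotProduct_comm] using h

theorem dotProductBilin_nondegenerate : Nondegenerate 𝔹 :=
  ⟨fun x hx => dotProduct_eq_zero x hx,
    fun y hy => dotProduct_eq_zero y fun x => dotProduct_comm y x ▸ hy x⟩

theorem mem_orthogonal_span_one_iff {x : n → K} :
    x ∈ orthogonal 𝔹 (K ∙ 1) ↔ ∑ i, x i = 0 := by
  rw [mem_orthogonal_span_iff]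
  simp [one_dotProduct]

theorem finrank_orthogonal_span_one [Nonempty n] :
    finrank K (orthogonal 𝔹 (K ∙ 1)) = Fintype.card n - 1 := by
  rw [finrank_orthogonal dotProductBilin_nondegenerate, finrank_span_singleton one_ne_zero,
    finrank_fintype_fun_eq_card]

variable [CharP K 2]

theorem dotProduct_self_eq_sum_sq (x : n → K) : x ⬝ᵥ x = (∑ i, x i) ^ 2 := by
  rw [sq, CharTwo.sum_mul_self]
  rfl

theorem le_orthogonal_span_one_of_isTotallyIsotropic {U : Submodule K (n → K)}
    (hU : IsTotallyIsotropic 𝔹 U) : U ≤ orthogonal 𝔹 (K ∙ 1) := fun x hx => by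
  have : x ⬝ᵥ x = 0 := hU x hx x hx
  rwa [dotProduct_self_eq_sum_sq, sq_eq_zero_iff, ← mem_orthogonal_span_one_iff] at this

theorem isAlt_restrict_orthogonal_span_one : (restrict 𝔹 (orthogonal 𝔹 (K ∙ 1))).IsAlt :=
  fun x => by simp [dotProduct_self_eq_sum_sq, mem_orthogonal_span_one_iff.1 x.2]

theorem nondegenerate_restrict_orthogonal_span_one (hn : Odd (Fintype.card n)) :
    (restrict 𝔹 (orthogonal 𝔹 (K ∙ 1))).Nondegenerate := by
  refine restrict_nondegenerate_orthogonal_spanSingleton _ dotProductBilin_nondegenerate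
    dotProductBilin_isRefl ?_
  simp [one_dotProduct_one, CharTwo.natCast_eq_ite, Nat.not_even_iff_odd.2 hn]

end DotProduct

end LinearMap.BilinForm

open LinearMap.BilinForm

theorem selfOrthogonal_count_char_two_general (F : Type*) [Field F] [Fintype F]
    (q ε : ℕ) (hq : Fintype.card F = q) (hqeven : Even q) (hε : Odd ε) :
    Nat.card {U : Submodule F (Fin ε → F) //
        ∀ x ∈ U, ∀ y ∈ U, (∑ i, x i * y i) = 0}
      = ∑ k ∈ Finset.range ((ε - 1) / 2 + 1),
          gaussBinom q ((ε - 1) / 2) k *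
            ∏ a ∈ Finset.range k, (q ^ ((ε - 2 * a - 1) / 2) + 1) := by
  obtain ⟨m, hm⟩ := hε
  have : CharP F 2 := ringChar.eq_iff.1 <| FiniteField.even_card_iff_char_two.2 <|
    Nat.even_iff.1 (hq ▸ hqeven)
  have : Nonempty (Fin ε) := ⟨⟨0, by omega⟩⟩
  set B : BilinForm F (Fin ε → F) := dotProductBilin F F
  have hV₀ : finrank F (B.orthogonal (F ∙ 1)) = 2 * ((ε - 1) / 2) := by
    rw [finrank_orthogonal_span_one, Fintype.card_fin]
    omega
  change Nat.card {U // B.IsTotallyIsotropic U} = _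
  rw [← Nat.card_congr (isTotallyIsotropicEquivRestrict _
      fun _ => le_orthogonal_span_one_of_isTotallyIsotropic),
    card_isTotallyIsotropic isAlt_restrict_orthogonal_span_one
      (nondegenerate_restrict_orthogonal_span_one (by rw [Fintype.card_fin]; exact ⟨m, hm⟩)) hV₀,
    hq]
  refine sum_congr rfl fun k _ => congrArg _ (prod_congr rfl fun a _ => ?_)
  congr 2
  omega

/-- Let `q` be even and `G = F_q^ε` with the (non-degenerate, symmetric) dot product
`[x,y] = Σ_i x_i y_i`, so that `[c,c] = 0` for every `c` in the hyperplane
`{c : Σ_i c_i = 0}`.  If `ε` is odd, then the number of self-orthogonal subspaces of `G`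
equals `Σ_{k=0}^{(ε−1)/2} [(ε−1)/2 choose k]_q ∏_{a=0}^{k−1} (q^{(ε−2a−1)/2} + 1)`. -/
theorem selfOrthogonal_count_char_two (F : Type*) [Field F] [Fintype F]
    (q ε : ℕ) (hq : Fintype.card F = q) (hqeven : Even q) (hε : Odd ε)
    (hself : ∀ c : Fin ε → F, (∑ i, c i) = 0 → (∑ i, c i * c i) = 0) :
    Nat.card {U : Submodule F (Fin ε → F) //
        ∀ x ∈ U, ∀ y ∈ U, (∑ i, x i * y i) = 0}
      = ∑ k ∈ Finset.range ((ε - 1) / 2 + 1),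
          gaussBinom q ((ε - 1) / 2) k *
            ∏ a ∈ Finset.range k, (q ^ ((ε - 2 * a - 1) / 2) + 1) :=
  selfOrthogonal_count_char_two_general F q ε hq hqeven hε
end
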